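/- arXiv:1710.03936 — 7 statements merged into one kernel-verified Lean document; each statement's English description precedes it below -/
import Mathlib

section
/- Let ρ₀ > 0 and let G : (0,ρ₀) → ℝ be differentiable. Suppose there are real numbers a₀, b₀, a₁, b₁ and d₀, c₁, d₁, and a constant C > 0, such that for all sufficiently small ρ > 0: |G(ρ) − (a₀ ln ρ + b₀ + a₁ ρ ln ρ + b₁ ρ)| ≤ C ρ²(1 + |ln ρ|) and |G'(ρ) − (d₀/ρ + c₁ ln ρ + d₁)| ≤ C ρ(1 + |ln ρ|). Then d₀ = a₀, c₁ = a₁ and d₁ = b₁ + a₁. -/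
/-!
Let `P` be the expansion of `G` and `Q(ρ) = d₀ ln ρ + c₁ ρ ln ρ + (d₁ - c₁) ρ` the antiderivative
of the expansion of `G'`, so that `(G - Q)' = O(ρ (1 + |ln ρ|))`. As `G - Q` is only controlled
through its derivative, i.e. up to an additive constant, compare values at `ρ` and `2ρ`: the mean
value theorem on `[ρ, 2ρ]` gives `(G - Q)(2ρ) - (G - Q)(ρ) = O(ρ² (1 + |ln ρ|))`, and the
expansion of `G` gives the same for `G - P`. Hence
`(P - Q)(2ρ) - (P - Q)(ρ) = (a₀ - d₀) ln 2 + (a₁ - c₁) ρ ln ρ + (2 (a₁ - c₁) ln 2 + b₁ + c₁ - d₁) ρ`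
is `O(ρ² (1 + |ln ρ|))`, which forces all three coefficients to vanish.
-/

open Real Filter Topology Asymptotics Set

noncomputable def logGauge (k : ℕ) (ρ : ℝ) : ℝ := ρ ^ k * (1 + |log ρ|)

noncomputable def logModel (a b c e ρ : ℝ) : ℝ := a * log ρ + b + c * ρ * log ρ + e * ρ

lemma abs_log_le_abs_log {ρ x : ℝ} (hρ : 0 < ρ) (hρx : ρ ≤ x) (hx : x ≤ 1) :
    |log x| ≤ |log ρ| := by
  rw [abs_of_nonpos (log_nonpos (hρ.trans_le hρx).le hx),
    abs_of_nonpos (log_nonpos hρ.le (hρx.trans hx))]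
  exact neg_le_neg (log_le_log hρ hρx)

lemma logGauge_nonneg (k : ℕ) {ρ : ℝ} (hρ : 0 ≤ ρ) : 0 ≤ logGauge k ρ := by
  unfold logGauge; positivity

lemma logGauge_succ (k : ℕ) (ρ : ℝ) : logGauge (k + 1) ρ = ρ * logGauge k ρ := by
  rw [logGauge, logGauge, pow_succ]; ring

lemma logGauge_le_two_pow_mul {k : ℕ} {ρ x : ℝ} (hρ : 0 < ρ) (hρx : ρ ≤ x) (hx : x ≤ 2 * ρ)
    (h2ρ : 2 * ρ ≤ 1) : logGauge k x ≤ 2 ^ k * logGauge k ρ := by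
  unfold logGauge
  calc x ^ k * (1 + |log x|) ≤ (2 * ρ) ^ k * (1 + |log ρ|) := by
        have hlog := abs_log_le_abs_log hρ hρx (hx.trans h2ρ)
        gcongr ?_ * (1 + ?_)
        exact pow_le_pow_left₀ (hρ.trans_le hρx).le hx k
    _ = 2 ^ k * (ρ ^ k * (1 + |log ρ|)) := by ring

lemma tendsto_logGauge_nhdsGT_zero {k : ℕ} (hk : k ≠ 0) :
    Tendsto (logGauge k) (𝓝[>] 0) (𝓝 0) := by
  obtain ⟨n, rfl⟩ := Nat.exists_eq_succ_of_ne_zero hk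
  have hcont : Continuous fun ρ : ℝ => ρ ^ n * (ρ + |ρ * log ρ|) := by
    have := continuous_mul_log; fun_prop
  refine (hcont.tendsto' 0 0 (by simp)).mono_left nhdsWithin_le_nhds |>.congr' ?_
  filter_upwards [self_mem_nhdsWithin] with ρ (hρ : 0 < ρ)
  rw [logGauge, abs_mul, abs_of_pos hρ, pow_succ]
  ring

lemma isBigO_logGauge_of_abs_le {f : ℝ → ℝ} {C : ℝ} {k : ℕ}
    (h : ∀ᶠ ρ in 𝓝[>] 0, |f ρ| ≤ C * ρ ^ k * (1 + |log ρ|)) :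
    f =O[𝓝[>] 0] logGauge k := by
  refine IsBigO.of_bound C ?_
  filter_upwards [h, self_mem_nhdsWithin] with ρ hfρ (hρ : 0 < ρ)
  rwa [norm_eq_abs, norm_eq_abs, abs_of_nonneg (logGauge_nonneg k hρ.le), logGauge, ← mul_assoc]

lemma hasDerivAt_logModel (a b c e : ℝ) {x : ℝ} (hx : 0 < x) :
    HasDerivAt (logModel a b c e) (a / x + c * log x + (c + e)) x := by
  have hlog := hasDerivAt_log hx.ne'
  have h := ((((hlog.const_mul a).add_const b).add
    (((hasDerivAt_id x).const_mul c).mul hlog)).add ((hasDerivAt_id x).const_mul e))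
  refine (h.congr_of_eventuallyEq (Eventually.of_forall fun y => ?_)).congr_deriv ?_
  · simp only [logModel, Pi.add_apply, Pi.mul_apply, id]
  · field_simp
    simp only [id]
    ring

lemma logModel_two_mul_sub (a b c e : ℝ) {ρ : ℝ} (hρ : 0 < ρ) :
    logModel a b c e (2 * ρ) - logModel a b c e ρ
      = a * log 2 + c * (ρ * log ρ) + (2 * c * log 2 + e) * ρ := by
  rw [logModel, logModel, log_mul two_ne_zero hρ.ne']
  ring

lemma eventually_forall_Icc_two_mul {p : ℝ → Prop} (h : ∀ᶠ x in 𝓝[>] 0, p x) :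
    ∀ᶠ ρ in 𝓝[>] 0, ∀ x ∈ Icc ρ (2 * ρ), p x := by
  obtain ⟨ε, hε, hsub⟩ := mem_nhdsGT_iff_exists_Ioo_subset.mp h
  filter_upwards [Ioo_mem_nhdsGT (half_pos hε)] with ρ hρ x hx
  exact hsub ⟨hρ.1.trans_le hx.1, by linarith [hx.2, hρ.2]⟩

lemma eventually_two_mul_le_one : ∀ᶠ ρ : ℝ in 𝓝[>] 0, 2 * ρ ≤ 1 := by
  filter_upwards [eventually_forall_Icc_two_mul (Ioc_mem_nhdsGT one_pos),
    self_mem_nhdsWithin] with ρ h (hρ : 0 < ρ)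
  exact (h (2 * ρ) ⟨by linarith, le_rfl⟩).2

lemma tendsto_two_mul_nhdsGT_zero : Tendsto (fun ρ : ℝ => 2 * ρ) (𝓝[>] 0) (𝓝[>] 0) :=
  tendsto_comap.mono_left (comap_mulLeft_nhdsGT_zero two_pos).ge

lemma logGauge_comp_two_mul_isBigO (k : ℕ) :
    (fun ρ => logGauge k (2 * ρ)) =O[𝓝[>] 0] logGauge k := by
  refine IsBigO.of_bound (2 ^ k) ?_
  filter_upwards [eventually_two_mul_le_one, self_mem_nhdsWithin] with ρ h2ρ (hρ : 0 < ρ)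
  rw [norm_of_nonneg (logGauge_nonneg k (by positivity)),
    norm_of_nonneg (logGauge_nonneg k hρ.le)]
  exact logGauge_le_two_pow_mul hρ (by linarith) le_rfl h2ρ

lemma isBigO_sub_comp_two_mul_of_hasDerivAt {F F' : ℝ → ℝ} {k : ℕ}
    (hF : ∀ᶠ x in 𝓝[>] 0, HasDerivAt F (F' x) x) (hF' : F' =O[𝓝[>] 0] logGauge k) :
    (fun ρ => F (2 * ρ) - F ρ) =O[𝓝[>] 0] logGauge (k + 1) := by
  obtain ⟨c, hc, hcF'⟩ := hF'.exists_pos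
  refine IsBigO.of_bound (2 ^ k * c) ?_
  filter_upwards [eventually_forall_Icc_two_mul (hF.and hcF'.bound), eventually_two_mul_le_one,
    self_mem_nhdsWithin] with ρ hIcc h2ρ (hρ : 0 < ρ)
  have hbound : ∀ x ∈ Icc ρ (2 * ρ), ‖F' x‖ ≤ c * (2 ^ k * logGauge k ρ) := fun x hx => by
    refine (hIcc x hx).2.trans ?_
    rw [norm_of_nonneg (logGauge_nonneg k (hρ.le.trans hx.1))]
    exact mul_le_mul_of_nonneg_left (logGauge_le_two_pow_mul hρ hx.1 hx.2 h2ρ) hc.le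
  have hmvt := (convex_Icc ρ (2 * ρ)).norm_image_sub_le_of_norm_hasDerivWithin_le
    (fun x hx => (hIcc x hx).1.hasDerivWithinAt) hbound
    (left_mem_Icc.mpr (by linarith)) (right_mem_Icc.mpr (by linarith))
  rw [norm_of_nonneg (logGauge_nonneg _ hρ.le), logGauge_succ]
  calc ‖F (2 * ρ) - F ρ‖ ≤ c * (2 ^ k * logGauge k ρ) * ‖2 * ρ - ρ‖ := hmvt
    _ = 2 ^ k * c * (ρ * logGauge k ρ) := by
      rw [show 2 * ρ - ρ = ρ by ring, norm_of_nonneg hρ.le]; ring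

lemma eq_zero_of_isBigO_logGauge_one {β δ : ℝ}
    (h : (fun ρ => β * log ρ + δ) =O[𝓝[>] 0] logGauge 1) : β = 0 ∧ δ = 0 := by
  have hlim : Tendsto (fun ρ => β * log ρ + δ) (𝓝[>] 0) (𝓝 0) :=
    h.trans_tendsto (tendsto_logGauge_nhdsGT_zero one_ne_zero)
  have hβ : β = 0 := by
    by_contra hβ
    have hlog : Tendsto log (𝓝[>] 0) (𝓝 ((0 - δ) / β)) :=
      ((hlim.sub_const δ).div_const β).congr fun ρ => by field_simp; ring
    exact not_tendsto_nhds_of_tendsto_atBot tendsto_log_nhdsGT_zero _ hlog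
  subst hβ
  exact ⟨rfl, by simpa using hlim⟩

lemma eq_zero_of_isBigO_logGauge_two {α β δ : ℝ}
    (h : (fun ρ => α + β * (ρ * log ρ) + δ * ρ) =O[𝓝[>] 0] logGauge 2) :
    α = 0 ∧ β = 0 ∧ δ = 0 := by
  have hcont : Continuous fun ρ : ℝ => α + β * (ρ * log ρ) + δ * ρ := by
    have := continuous_mul_log; fun_prop
  have hα : α = 0 := tendsto_nhds_unique
    ((hcont.tendsto' 0 α (by simp)).mono_left nhdsWithin_le_nhds)
    (h.trans_tendsto (tendsto_logGauge_nhdsGT_zero two_ne_zero))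
  subst hα
  have h₁ : (fun ρ => β * log ρ + δ) =O[𝓝[>] 0] logGauge 1 := by
    refine ((isBigO_refl (fun ρ : ℝ => ρ⁻¹) _).mul h).congr' ?_ ?_ <;>
      filter_upwards [self_mem_nhdsWithin] with ρ (hρ : 0 < ρ)
    · field_simp; ring
    · rw [logGauge_succ]; field_simp
  exact ⟨rfl, eq_zero_of_isBigO_logGauge_one h₁⟩

theorem formal_differentiation_of_expansion_general
    (ρ₀ : ℝ) (hρ₀ : 0 < ρ₀) (G : ℝ → ℝ)
    (hdiff : ∀ ρ ∈ Set.Ioo (0:ℝ) ρ₀, DifferentiableAt ℝ G ρ)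
    (a₀ b₀ a₁ b₁ d₀ c₁ d₁ C : ℝ)
    (hG : ∀ᶠ ρ in nhdsWithin 0 (Set.Ioi (0:ℝ)),
      |G ρ - (a₀ * Real.log ρ + b₀ + a₁ * ρ * Real.log ρ + b₁ * ρ)|
        ≤ C * ρ ^ 2 * (1 + |Real.log ρ|))
    (hG' : ∀ᶠ ρ in nhdsWithin 0 (Set.Ioi (0:ℝ)),
      |deriv G ρ - (d₀ / ρ + c₁ * Real.log ρ + d₁)|
        ≤ C * ρ * (1 + |Real.log ρ|)) :
    d₀ = a₀ ∧ c₁ = a₁ ∧ d₁ = b₁ + a₁ := by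
  have hF : ∀ᶠ x in 𝓝[>] 0,
      HasDerivAt (fun x => G x - logModel d₀ 0 c₁ (d₁ - c₁) x)
        (deriv G x - (d₀ / x + c₁ * log x + d₁)) x := by
    filter_upwards [Ioo_mem_nhdsGT hρ₀] with x hx
    exact (hdiff x hx).hasDerivAt.sub
      ((hasDerivAt_logModel d₀ 0 c₁ (d₁ - c₁) hx.1).congr_deriv (by ring))
  have hE : (fun ρ => G ρ - logModel a₀ b₀ a₁ b₁ ρ) =O[𝓝[>] 0] logGauge 2 :=
    isBigO_logGauge_of_abs_le hG
  have hF' := isBigO_logGauge_of_abs_le (k := 1) (by simpa only [pow_one] using hG')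
  have hE₂ :=
    (hE.comp_tendsto tendsto_two_mul_nhdsGT_zero).trans (logGauge_comp_two_mul_isBigO 2)
  have hPQ : (fun ρ => (a₀ - d₀) * log 2 + (a₁ - c₁) * (ρ * log ρ)
      + (2 * (a₁ - c₁) * log 2 + (b₁ - (d₁ - c₁))) * ρ) =O[𝓝[>] 0] logGauge 2 := by
    refine ((isBigO_sub_comp_two_mul_of_hasDerivAt hF hF').sub (hE₂.sub hE)).congr' ?_
      EventuallyEq.rfl
    filter_upwards [self_mem_nhdsWithin] with ρ (hρ : 0 < ρ)
    simp only [Function.comp_apply]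
    linear_combination
      logModel_two_mul_sub a₀ b₀ a₁ b₁ hρ - logModel_two_mul_sub d₀ 0 c₁ (d₁ - c₁) hρ
  obtain ⟨h₀, h₁, h₂⟩ := eq_zero_of_isBigO_logGauge_two hPQ
  have hα : a₀ - d₀ = 0 := (mul_eq_zero.mp h₀).resolve_right (log_pos one_lt_two).ne'
  rw [h₁] at h₂
  exact ⟨by linarith, by linarith, by linarith⟩

/-- If a differentiable function `G` on `(0,ρ₀)` and its derivative admit asymptotic
expansions in `ρ^k ln ρ, ρ^k` as `ρ → 0⁺`, the coefficients of the derivative expansion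
are obtained by formal differentiation. -/
theorem formal_differentiation_of_expansion
    (ρ₀ : ℝ) (hρ₀ : 0 < ρ₀) (G : ℝ → ℝ)
    (hdiff : ∀ ρ ∈ Set.Ioo (0:ℝ) ρ₀, DifferentiableAt ℝ G ρ)
    (a₀ b₀ a₁ b₁ d₀ c₁ d₁ C : ℝ) (hC : 0 < C)
    (hG : ∀ᶠ ρ in nhdsWithin 0 (Set.Ioi (0:ℝ)),
      |G ρ - (a₀ * Real.log ρ + b₀ + a₁ * ρ * Real.log ρ + b₁ * ρ)|
        ≤ C * ρ ^ 2 * (1 + |Real.log ρ|))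
    (hG' : ∀ᶠ ρ in nhdsWithin 0 (Set.Ioi (0:ℝ)),
      |deriv G ρ - (d₀ / ρ + c₁ * Real.log ρ + d₁)|
        ≤ C * ρ * (1 + |Real.log ρ|)) :
    d₀ = a₀ ∧ c₁ = a₁ ∧ d₁ = b₁ + a₁ :=
  formal_differentiation_of_expansion_general ρ₀ hρ₀ G hdiff a₀ b₀ a₁ b₁ d₀ c₁ d₁ C hG hG'
end

section
/- Let f : [0,1) → ℝ be infinitely differentiable and integrable on (0,1). Define F(ρ) := ∫₀¹ f(x)·√(x(x+ρ)) dx for ρ > 0. Then there exist ρ₀ > 0 and C > 0 such that for all ρ ∈ (0,ρ₀): |F(ρ) − (∫₀¹ x f(x) dx + (ρ/2)·∫₀¹ f(x) dx + (f(0)/8)·ρ² ln ρ)| ≤ C ρ². -/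
/-!
Rationalising, `√(x(x+ρ)) = x + ρ/2 - ρ²/(4w)` with `w = x + ρ/2 + √(x(x+ρ))`, so
`F(ρ) - ∫ x f - (ρ/2) ∫ f = -(ρ²/4) ∫ f / w`. Since `2x + ρ/2 ≤ w ≤ 2x + ρ`, comparison with
explicit logarithmic integrals gives `∫₀¹ 1/w = -(ln ρ)/2 + O(1)`, while `∫ (f - f 0)/w` is bounded
by `∫ |f - f 0|/x`, which is finite because `f` is `C¹` at `0` and integrable.
-/

open MeasureTheory Set Real

namespace SqrtExpansion

noncomputable def conjSum (ρ x : ℝ) : ℝ := x + ρ / 2 + √(x * (x + ρ))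

variable {ρ x : ℝ}

lemma two_mul_add_half_le_conjSum (hρ : 0 ≤ ρ) (hx : 0 ≤ x) : 2 * x + ρ / 2 ≤ conjSum ρ x := by
  have : x ≤ √(x * (x + ρ)) := Real.le_sqrt_of_sq_le (by nlinarith)
  unfold conjSum; linarith

lemma conjSum_le_two_mul_add (hρ : 0 ≤ ρ) (hx : 0 ≤ x) : conjSum ρ x ≤ 2 * x + ρ := by
  have : √(x * (x + ρ)) ≤ x + ρ / 2 := Real.sqrt_le_iff.mpr ⟨by linarith, by nlinarith⟩
  unfold conjSum; linarith

lemma conjSum_pos (hρ : 0 < ρ) (hx : 0 ≤ x) : 0 < conjSum ρ x := by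
  linarith [two_mul_add_half_le_conjSum hρ.le hx]

lemma sqrt_mul_add_eq (hρ : 0 < ρ) (hx : 0 ≤ x) :
    √(x * (x + ρ)) = x + ρ / 2 - ρ ^ 2 / 4 * (conjSum ρ x)⁻¹ := by
  have hsq : √(x * (x + ρ)) ^ 2 = x * (x + ρ) := Real.sq_sqrt (by positivity)
  have hw := (conjSum_pos hρ hx).ne'
  field_simp
  unfold conjSum at hw ⊢
  nlinarith [hsq]

lemma continuousOn_inv_conjSum (hρ : 0 < ρ) :
    ContinuousOn (fun x => (conjSum ρ x)⁻¹) (Ici 0) := by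
  refine ContinuousOn.inv₀ ?_ fun x hx => (conjSum_pos hρ hx).ne'
  unfold conjSum
  fun_prop

lemma integrableOn_mul_inv_conjSum {h : ℝ → ℝ} (hh : IntegrableOn h (Ioo 0 1)) (hρ : 0 < ρ) :
    IntegrableOn (fun x => h x * (conjSum ρ x)⁻¹) (Ioo 0 1) :=
  hh.mul_continuousOn_of_subset ((continuousOn_inv_conjSum hρ).mono Icc_subset_Ici_self)
    measurableSet_Ioo isCompact_Icc Ioo_subset_Icc_self

lemma integrableOn_inv_conjSum (hρ : 0 < ρ) :
    IntegrableOn (fun x => (conjSum ρ x)⁻¹) (Ioo 0 1) :=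
  ((continuousOn_inv_conjSum hρ).mono Icc_subset_Ici_self).integrableOn_Icc.mono_set
    Ioo_subset_Icc_self

lemma integral_inv_two_mul_add {c : ℝ} (hc : 0 < c) :
    ∫ x in Ioo (0:ℝ) 1, (2 * x + c)⁻¹ = log ((2 + c) / c) / 2 := by
  rw [← integral_Ioc_eq_integral_Ioo, ← intervalIntegral.integral_of_le zero_le_one,
    intervalIntegral.integral_comp_mul_add (fun x => x⁻¹) two_ne_zero,
    integral_inv_of_pos (by linarith) (by linarith)]
  simp only [mul_zero, zero_add, mul_one, smul_eq_mul]
  ring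

lemma integral_mul_sqrt_eq {f : ℝ → ℝ} (hf : IntegrableOn f (Ioo 0 1)) (hρ : 0 < ρ) :
    ∫ x in Ioo (0:ℝ) 1, f x * √(x * (x + ρ)) =
      (∫ x in Ioo (0:ℝ) 1, x * f x) + ρ / 2 * (∫ x in Ioo (0:ℝ) 1, f x)
        - ρ ^ 2 / 4 * ∫ x in Ioo (0:ℝ) 1, f x * (conjSum ρ x)⁻¹ := by
  have hxf : IntegrableOn (fun x => x * f x) (Ioo 0 1) :=
    IntegrableOn.continuousOn_mul_of_subset (continuousOn_id' _) hf isCompact_Icc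
      measurableSet_Ioo Ioo_subset_Icc_self
  have hpointwise : EqOn (fun x => f x * √(x * (x + ρ)))
      (fun x => (x * f x + ρ / 2 * f x) - ρ ^ 2 / 4 * (f x * (conjSum ρ x)⁻¹)) (Ioo 0 1) :=
    fun x hx => by simp only [sqrt_mul_add_eq hρ hx.1.le]; ring
  rw [setIntegral_congr_fun measurableSet_Ioo hpointwise,
    integral_sub (f := fun x => x * f x + ρ / 2 * f x) (hxf.add (hf.const_mul _))
      ((integrableOn_mul_inv_conjSum hf hρ).const_mul _),
    integral_add hxf (hf.const_mul _), integral_const_mul, integral_const_mul]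

lemma integral_inv_conjSum_add_log_mem (hρ : 0 < ρ) (hρ1 : ρ ≤ 1) :
    (∫ x in Ioo (0:ℝ) 1, (conjSum ρ x)⁻¹) + log ρ / 2 ∈ Icc 0 2 := by
  have hint : ∀ c > 0, IntegrableOn (fun x : ℝ => (2 * x + c)⁻¹) (Ioo 0 1) := fun c hc =>
    (ContinuousOn.integrableOn_Icc (ContinuousOn.inv₀ (by fun_prop)
      fun x hx => by linarith [hx.1])).mono_set Ioo_subset_Icc_self
  have hw := integrableOn_inv_conjSum hρ
  have hlower := setIntegral_mono_on (hint ρ hρ) hw measurableSet_Ioo fun x hx =>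
    inv_anti₀ (conjSum_pos hρ hx.1.le) (conjSum_le_two_mul_add hρ.le hx.1.le)
  have hupper := setIntegral_mono_on hw (hint (ρ / 2) (by positivity)) measurableSet_Ioo
    fun x hx => inv_anti₀ (by linarith [hx.1]) (two_mul_add_half_le_conjSum hρ.le hx.1.le)
  rw [integral_inv_two_mul_add hρ] at hlower
  rw [integral_inv_two_mul_add (by positivity)] at hupper
  rw [log_div (by linarith) hρ.ne'] at hlower
  rw [log_div (by linarith) (by positivity), log_div hρ.ne' two_ne_zero] at hupper
  have h1 : 0 ≤ log (2 + ρ) := log_nonneg (by linarith)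
  have h2 : log (2 + ρ / 2) ≤ 2 := by linarith [log_le_sub_one_of_pos (by linarith : 0 < 2 + ρ / 2)]
  have h3 : log 2 ≤ 1 := by linarith [log_le_sub_one_of_pos (by norm_num : (0:ℝ) < 2)]
  constructor <;> linarith

lemma abs_integral_mul_inv_conjSum_le {h : ℝ → ℝ}
    (hh : IntegrableOn (fun x => h x / x) (Ioo 0 1)) (hρ : 0 ≤ ρ) :
    |∫ x in Ioo (0:ℝ) 1, h x * (conjSum ρ x)⁻¹| ≤ ∫ x in Ioo (0:ℝ) 1, |h x / x| := by
  rw [← Real.norm_eq_abs]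
  refine norm_integral_le_of_norm_le hh.abs
    (ae_restrict_of_forall_mem measurableSet_Ioo fun x hx => ?_)
  have hxw : x ≤ conjSum ρ x := by linarith [two_mul_add_half_le_conjSum hρ hx.1.le, hx.1]
  rw [Real.norm_eq_abs, abs_mul, abs_div, abs_inv, abs_of_pos hx.1,
    abs_of_pos (hx.1.trans_le hxw), div_eq_mul_inv]
  exact mul_le_mul_of_nonneg_left (inv_anti₀ hx.1 hxw) (abs_nonneg _)


lemma integrableOn_sub_div_of_contDiffWithinAt {f : ℝ → ℝ} {b : ℝ} (hb : 0 < b)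
    (hf : ContDiffWithinAt ℝ 1 f (Ico 0 b) 0) (hfint : IntegrableOn f (Ioo 0 b)) :
    IntegrableOn (fun x => (f x - f 0) / x) (Ioo 0 b) := by
  obtain ⟨K, t, ht, hK⟩ := hf.exists_lipschitzOnWith (convex_Ico 0 b)
  rw [nhdsWithin_Ico_eq_nhdsGE hb] at ht
  obtain ⟨δ, hδ : 0 < δ, hδt⟩ := (mem_nhdsGE_iff_exists_Ico_subset).mp ht
  have hmeas : AEStronglyMeasurable (fun x => (f x - f 0) / x) (volume.restrict (Ioo 0 b)) :=
    ((hfint.aestronglyMeasurable.aemeasurable.sub_const _).div aemeasurable_id).aestronglyMeasurable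
  refine Integrable.mono' (g := fun x => K + δ⁻¹ * (|f x| + |f 0|))
    ((integrable_const _).add ((hfint.abs.add (integrable_const _)).const_mul _)) hmeas
    (ae_restrict_of_forall_mem measurableSet_Ioo fun x hx => ?_)
  have hKx : 0 ≤ (K : ℝ) * x := mul_nonneg K.2 hx.1.le
  have hSx : 0 ≤ δ⁻¹ * (|f x| + |f 0|) * x := by have := hx.1; positivity
  rw [Real.norm_eq_abs, abs_div, abs_of_pos hx.1, div_le_iff₀ hx.1, add_mul]
  rcases lt_or_ge x δ with hxδ | hxδ
  · have := hK.dist_le_mul x (hδt ⟨hx.1.le, hxδ⟩) 0 (hδt ⟨le_rfl, hδ⟩)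
    rw [Real.dist_eq, Real.dist_eq, sub_zero, abs_of_pos hx.1] at this
    linarith
  · have hxδ' : 1 ≤ δ⁻¹ * x := by rwa [le_inv_mul_iff₀ hδ, mul_one]
    calc |f x - f 0| ≤ |f x| + |f 0| := abs_sub _ _
      _ ≤ δ⁻¹ * (|f x| + |f 0|) * x := by
        rw [mul_right_comm]; exact le_mul_of_one_le_left (by positivity) hxδ'
      _ ≤ K * x + δ⁻¹ * (|f x| + |f 0|) * x := by linarith

lemma abs_integral_mul_inv_conjSum_add_log_le {f : ℝ → ℝ} (hfint : IntegrableOn f (Ioo 0 1))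
    (hdiff : IntegrableOn (fun x => (f x - f 0) / x) (Ioo 0 1)) (hρ : 0 < ρ) (hρ1 : ρ ≤ 1) :
    |(∫ x in Ioo (0:ℝ) 1, f x * (conjSum ρ x)⁻¹) + f 0 / 2 * log ρ|
      ≤ (∫ x in Ioo (0:ℝ) 1, |(f x - f 0) / x|) + 2 * |f 0| := by
  have hsplit : ∫ x in Ioo (0:ℝ) 1, f x * (conjSum ρ x)⁻¹ =
      (∫ x in Ioo (0:ℝ) 1, (f x - f 0) * (conjSum ρ x)⁻¹)
        + f 0 * ∫ x in Ioo (0:ℝ) 1, (conjSum ρ x)⁻¹ := by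
    rw [← integral_const_mul, ← integral_add (f := fun x => (f x - f 0) * (conjSum ρ x)⁻¹)
      (integrableOn_mul_inv_conjSum (hfint.sub (integrableOn_const measure_Ioo_lt_top.ne)) hρ)
      ((integrableOn_inv_conjSum hρ).const_mul _)]
    exact setIntegral_congr_fun measurableSet_Ioo fun x _ => by ring
  obtain ⟨hlog0, hlog2⟩ := integral_inv_conjSum_add_log_mem hρ hρ1
  have hlog : |(∫ x in Ioo (0:ℝ) 1, (conjSum ρ x)⁻¹) + log ρ / 2| ≤ 2 :=
    abs_le.mpr ⟨by linarith, hlog2⟩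
  rw [hsplit, add_assoc, show ∀ a b c : ℝ, a * b + a / 2 * c = a * (b + c / 2) by intros; ring]
  refine (abs_add_le _ _).trans (add_le_add (abs_integral_mul_inv_conjSum_le hdiff hρ.le) ?_)
  rw [abs_mul, mul_comm 2]
  exact mul_le_mul_of_nonneg_left hlog (abs_nonneg _)

end SqrtExpansion

open SqrtExpansion

/-- Expansion of `F(ρ) = ∫₀¹ f(x) √(x(x+ρ)) dx` as `ρ → 0⁺`. -/
theorem expansion_F
    (f : ℝ → ℝ)
    (hf : ContDiffOn ℝ (⊤ : ℕ∞) f (Set.Ico 0 1))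
    (hfint : IntegrableOn f (Set.Ioo 0 1)) :
    ∃ ρ₀ > (0:ℝ), ∃ C > (0:ℝ), ∀ ρ ∈ Set.Ioo (0:ℝ) ρ₀,
      |(∫ x in Set.Ioo (0:ℝ) 1, f x * Real.sqrt (x * (x + ρ)))
        - ((∫ x in Set.Ioo (0:ℝ) 1, x * f x)
           + (ρ / 2) * (∫ x in Set.Ioo (0:ℝ) 1, f x)
           + (f 0 / 8) * ρ ^ 2 * Real.log ρ)|
      ≤ C * ρ ^ 2 := by
  have hdiff : IntegrableOn (fun x => (f x - f 0) / x) (Ioo 0 1) :=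
    integrableOn_sub_div_of_contDiffWithinAt one_pos
      ((hf 0 ⟨le_rfl, one_pos⟩).of_le (by exact_mod_cast le_top)) hfint
  set K := (∫ x in Ioo (0:ℝ) 1, |(f x - f 0) / x|) + 2 * |f 0|
  refine ⟨1, one_pos, K / 4 + 1, by positivity, fun ρ ⟨hρ0, hρ1⟩ => ?_⟩
  have hremainder := abs_integral_mul_inv_conjSum_add_log_le hfint hdiff hρ0 hρ1.le
  set U := ∫ x in Ioo (0:ℝ) 1, f x * (conjSum ρ x)⁻¹
  rw [integral_mul_sqrt_eq hfint hρ0]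
  calc _ = |-(ρ ^ 2 / 4) * (U + f 0 / 2 * log ρ)| := by congr 1; ring
    _ = ρ ^ 2 / 4 * |U + f 0 / 2 * log ρ| := by
        rw [abs_mul, abs_neg, abs_of_pos (by positivity)]
    _ ≤ ρ ^ 2 / 4 * K := by gcongr
    _ ≤ (K / 4 + 1) * ρ ^ 2 := by nlinarith [sq_nonneg ρ]
end

section
/- Let h : [0,1) → ℝ be infinitely differentiable and integrable on (0,1). Define H(ρ) := ∫₀¹ h(x)/√(x(x+ρ)³) dx for ρ > 0. Then there exist ρ₀ > 0 and C > 0 such that for all ρ ∈ (0,ρ₀): |H(ρ) − 2h(0)/ρ| ≤ C(1 + |ln ρ|). -/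
/-!
The kernel `k_ρ(x) = (x (x + ρ)³)^(-1/2)` has the explicit primitive `2 √x / (ρ √(x + ρ))`, so its
mass on `(0, 1)` is `2 / (ρ √(1 + ρ)) = 2 / ρ + O(1)`. It remains to bound `∫ (h x - h 0) k_ρ x`:
near `0`, `h` is Lipschitz and `x k_ρ(x) ≤ 1 / (x + ρ)`, whose integral is `log ((1 + ρ) / ρ)`;
away from `0`, `k_ρ(x) ≤ 1 / x²` is bounded and the integrability of `h` suffices.
-/

open MeasureTheory

open Set Real

noncomputable def singularKernel (ρ x : ℝ) : ℝ := (√(x * (x + ρ) ^ 3))⁻¹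

section SingularKernel

variable {ρ x : ℝ}

lemma sqrt_mul_add_pow_three (hx : 0 ≤ x) (hxρ : 0 ≤ x + ρ) :
    √(x * (x + ρ) ^ 3) = √x * ((x + ρ) * √(x + ρ)) := by
  rw [sqrt_mul hx, pow_succ, sqrt_mul (by positivity), sqrt_sq hxρ]

lemma singularKernel_pos (hx : 0 < x) (hρ : 0 ≤ ρ) : 0 < singularKernel ρ x := by
  unfold singularKernel; positivity

lemma continuousOn_singularKernel (hρ : 0 ≤ ρ) : ContinuousOn (singularKernel ρ) (Ioi 0) :=
  ((by fun_prop : Continuous fun x => √(x * (x + ρ) ^ 3)).continuousOn).inv₀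
    fun x hx => (inv_pos.1 (singularKernel_pos hx hρ)).ne'

lemma hasDerivAt_singularKernel_primitive (hρ : 0 < ρ) (hx : 0 < x) :
    HasDerivAt (fun y => 2 * √y / (ρ * √(y + ρ))) (singularKernel ρ x) x := by
  have hxρ : 0 < x + ρ := by linarith
  have hsqrt_shift : HasDerivAt (fun y => √(y + ρ)) (1 / (2 * √(x + ρ))) x := by
    simpa using ((hasDerivAt_id x).add_const ρ).sqrt hxρ.ne'
  have hsxρ : 0 < √(x + ρ) := sqrt_pos.2 hxρ
  refine (((hasDerivAt_sqrt hx.ne').const_mul 2).div (hsqrt_shift.const_mul ρ)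
    (by positivity)).congr_deriv ?_
  rw [singularKernel, sqrt_mul_add_pow_three hx.le hxρ.le]
  field_simp
  linear_combination x * sq_sqrt hxρ.le - (x + ρ) * sq_sqrt hx.le

lemma mul_singularKernel_le (hx : 0 < x) (hρ : 0 ≤ ρ) : x * singularKernel ρ x ≤ (x + ρ)⁻¹ := by
  have hxρ : 0 < x + ρ := by linarith
  have hsx : 0 < √x := sqrt_pos.2 hx
  have hle : √x ≤ √(x + ρ) := sqrt_le_sqrt (by linarith)
  rw [singularKernel, sqrt_mul_add_pow_three hx.le hxρ.le, ← div_eq_mul_inv,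
    div_le_iff₀ (by positivity)]
  field_simp
  nlinarith [mul_self_sqrt hx.le, mul_le_mul_of_nonneg_left hle hsx.le]

lemma singularKernel_le_inv_sq (hx : 0 < x) (hρ : 0 ≤ ρ) : singularKernel ρ x ≤ (x ^ 2)⁻¹ := by
  have hsq : x ^ 2 ≤ √(x * (x + ρ) ^ 3) := by
    rw [← sqrt_sq (by positivity : 0 ≤ x ^ 2)]
    exact sqrt_le_sqrt (by nlinarith [pow_le_pow_left₀ hx.le (by linarith : x ≤ x + ρ) 3])
  exact inv_anti₀ (by positivity) hsq

lemma integral_singularKernel (hρ : 0 < ρ) :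
    ∫ x in Ioo 0 1, singularKernel ρ x = 2 / (ρ * √(1 + ρ)) := by
  have hcont : ContinuousOn (fun y => 2 * √y / (ρ * √(y + ρ))) (Icc 0 1) := by
    refine ContinuousOn.div (by fun_prop) (by fun_prop) fun y hy => ?_
    have : 0 < √(y + ρ) := sqrt_pos.2 (by linarith [hy.1])
    positivity
  have hderiv := fun x (hx : x ∈ Ioo (0:ℝ) 1) => hasDerivAt_singularKernel_primitive hρ hx.1
  have hint := intervalIntegral.integrableOn_deriv_of_nonneg hcont hderiv
    fun x hx => (singularKernel_pos hx.1 hρ.le).le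
  rw [← integral_Ioc_eq_integral_Ioo, ← intervalIntegral.integral_of_le zero_le_one,
    intervalIntegral.integral_eq_sub_of_hasDerivAt_of_le zero_le_one hcont hderiv
      ((intervalIntegrable_iff_integrableOn_Ioc_of_le zero_le_one).2 hint)]
  simp

lemma integrableOn_singularKernel (hρ : 0 < ρ) : IntegrableOn (singularKernel ρ) (Ioo 0 1) := by
  refine Integrable.of_integral_ne_zero ?_
  rw [integral_singularKernel hρ]
  have : 0 < √(1 + ρ) := sqrt_pos.2 (by linarith)
  positivity

end SingularKernel

lemma integrableOn_inv_add {ρ : ℝ} (hρ : 0 < ρ) : IntegrableOn (fun x => (x + ρ)⁻¹) (Ioo 0 1) :=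
  (ContinuousOn.integrableOn_Icc ((continuous_add_const ρ).continuousOn.inv₀
    fun x hx => (by linarith [hx.1] : 0 < x + ρ).ne')).mono_set Ioo_subset_Icc_self

lemma integral_Ioo_inv_add {ρ : ℝ} (hρ : 0 < ρ) :
    ∫ x in Ioo 0 1, (x + ρ)⁻¹ = log ((1 + ρ) / ρ) := by
  rw [← integral_Ioc_eq_integral_Ioo, ← intervalIntegral.integral_of_le zero_le_one,
    intervalIntegral.integral_comp_add_right (fun x => x⁻¹), zero_add,
    integral_inv_of_pos hρ (by linarith)]

lemma log_one_add_div_self_le {ρ : ℝ} (hρ : 0 < ρ) : log ((1 + ρ) / ρ) ≤ ρ + |log ρ| := by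
  rw [log_div (by linarith) hρ.ne']
  linarith [log_le_sub_one_of_pos (by linarith : 0 < 1 + ρ), neg_le_abs (log ρ)]

lemma abs_two_div_mul_sqrt_one_add_sub_two_div_le {ρ : ℝ} (hρ : 0 < ρ) :
    |2 / (ρ * √(1 + ρ)) - 2 / ρ| ≤ 1 := by
  have hsq : √(1 + ρ) ^ 2 = 1 + ρ := sq_sqrt (by linarith)
  have hs1 : 1 ≤ √(1 + ρ) := one_le_sqrt.2 (by linarith)
  have hdiff : 2 / (ρ * √(1 + ρ)) - 2 / ρ = -2 / (√(1 + ρ) * (√(1 + ρ) + 1)) := by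
    field_simp
    linear_combination -hsq
  rw [hdiff, abs_div, abs_neg, abs_two, abs_of_pos (by positivity), div_le_one (by positivity)]
  nlinarith

section LipschitzAtZero

open scoped NNReal

variable {h : ℝ → ℝ} {K : ℝ≥0} {δ ρ : ℝ}

lemma abs_sub_mul_singularKernel_le (hlip : LipschitzOnWith K h (Icc 0 δ)) (hδ : 0 < δ)
    (hρ : 0 ≤ ρ) {x : ℝ} (hx : 0 < x) :
    |(h x - h 0) * singularKernel ρ x| ≤ K * (x + ρ)⁻¹ + (δ ^ 2)⁻¹ * (|h x| + |h 0|) := by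
  have hk := singularKernel_pos hx hρ
  rw [abs_mul, abs_of_pos hk]
  rcases le_or_gt x δ with hxδ | hδx
  · have hsub : |h x - h 0| ≤ K * x := by
      simpa [Real.dist_eq, abs_of_pos hx] using
        hlip.dist_le_mul x ⟨hx.le, hxδ⟩ 0 ⟨le_rfl, hδ.le⟩
    calc |h x - h 0| * singularKernel ρ x ≤ K * (x * singularKernel ρ x) := by
          rw [← mul_assoc]; gcongr
      _ ≤ K * (x + ρ)⁻¹ := by gcongr; exact mul_singularKernel_le hx hρ
      _ ≤ _ := le_add_of_nonneg_right (by positivity)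
  · have hkδ : singularKernel ρ x ≤ (δ ^ 2)⁻¹ :=
      (singularKernel_le_inv_sq hx hρ).trans (by gcongr)
    calc |h x - h 0| * singularKernel ρ x ≤ (|h x| + |h 0|) * (δ ^ 2)⁻¹ := by
          gcongr; exact abs_sub _ _
      _ ≤ _ := by rw [mul_comm]; exact le_add_of_nonneg_left (by positivity)

lemma abs_integral_mul_singularKernel_sub_le (hlip : LipschitzOnWith K h (Icc 0 δ))
    (hδ : 0 < δ) (hint : IntegrableOn h (Ioo 0 1)) (hρ : 0 < ρ) :
    |(∫ x in Ioo 0 1, h x * singularKernel ρ x) - 2 * h 0 / ρ|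
      ≤ K * log ((1 + ρ) / ρ) + ((δ ^ 2)⁻¹ * ((∫ x in Ioo 0 1, |h x|) + |h 0|) + |h 0|) := by
  have hconst : IntegrableOn (fun _ => |h 0|) (Ioo (0:ℝ) 1) := integrableOn_const (by simp)
  have hsum : IntegrableOn (fun x => |h x| + |h 0|) (Ioo 0 1) := hint.abs.add hconst
  have hdom : IntegrableOn (fun x => K * (x + ρ)⁻¹ + (δ ^ 2)⁻¹ * (|h x| + |h 0|)) (Ioo 0 1) :=
    ((integrableOn_inv_add hρ).const_mul _).add (hsum.const_mul _)
  have hbound : ∀ᵐ x ∂volume.restrict (Ioo 0 1),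
      ‖(h x - h 0) * singularKernel ρ x‖ ≤ K * (x + ρ)⁻¹ + (δ ^ 2)⁻¹ * (|h x| + |h 0|) :=
    (ae_restrict_iff' measurableSet_Ioo).2 <| .of_forall fun x hx =>
      abs_sub_mul_singularKernel_le hlip hδ hρ.le hx.1
  have hdiff : IntegrableOn (fun x => (h x - h 0) * singularKernel ρ x) (Ioo 0 1) :=
    hdom.mono' ((hint.aestronglyMeasurable.sub aestronglyMeasurable_const).mul
      (((continuousOn_singularKernel hρ.le).mono fun _ hx => hx.1).aestronglyMeasurable
        measurableSet_Ioo)) hbound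
  have hsplit : ∫ x in Ioo 0 1, h x * singularKernel ρ x
      = (∫ x in Ioo 0 1, (h x - h 0) * singularKernel ρ x) + h 0 * (2 / (ρ * √(1 + ρ))) := by
    rw [← integral_singularKernel hρ, ← integral_const_mul,
      ← integral_add hdiff ((integrableOn_singularKernel hρ).const_mul _)]
    congr 1 with x
    ring
  have hdom_integral : ∫ x in Ioo 0 1, K * (x + ρ)⁻¹ + (δ ^ 2)⁻¹ * (|h x| + |h 0|)
      = K * log ((1 + ρ) / ρ) + (δ ^ 2)⁻¹ * ((∫ x in Ioo 0 1, |h x|) + |h 0|) := by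
    have habs : ∫ x in Ioo 0 1, |h x| + |h 0| = (∫ x in Ioo 0 1, |h x|) + |h 0| := by
      simp [integral_add hint.abs hconst]
    rw [integral_add ((integrableOn_inv_add hρ).const_mul _) (hsum.const_mul _),
      integral_const_mul, integral_const_mul, integral_Ioo_inv_add hρ, habs]
  calc |(∫ x in Ioo 0 1, h x * singularKernel ρ x) - 2 * h 0 / ρ|
      = |(∫ x in Ioo 0 1, (h x - h 0) * singularKernel ρ x)
          + h 0 * (2 / (ρ * √(1 + ρ)) - 2 / ρ)| := by
        rw [hsplit]; congr 1; ring
    _ ≤ |∫ x in Ioo 0 1, (h x - h 0) * singularKernel ρ x|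
          + |h 0| * |2 / (ρ * √(1 + ρ)) - 2 / ρ| := by
        rw [← abs_mul]; exact abs_add_le _ _
    _ ≤ (K * log ((1 + ρ) / ρ) + (δ ^ 2)⁻¹ * ((∫ x in Ioo 0 1, |h x|) + |h 0|)) + |h 0| * 1 := by
        gcongr
        · rw [← hdom_integral]; exact norm_integral_le_of_norm_le hdom hbound
        · exact abs_two_div_mul_sqrt_one_add_sub_two_div_le hρ
    _ = _ := by ring

end LipschitzAtZero

/-- Leading-order behavior of `H(ρ) = ∫₀¹ h(x)/√(x(x+ρ)³) dx` as `ρ → 0⁺`. -/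
theorem expansion_H
    (h : ℝ → ℝ)
    (hh : ContDiffOn ℝ (⊤ : ℕ∞) h (Set.Ico 0 1))
    (hhint : IntegrableOn h (Set.Ioo 0 1)) :
    ∃ ρ₀ > (0:ℝ), ∃ C > (0:ℝ), ∀ ρ ∈ Set.Ioo (0:ℝ) ρ₀,
      |(∫ x in Set.Ioo (0:ℝ) 1, h x / Real.sqrt (x * (x + ρ) ^ 3)) - 2 * h 0 / ρ|
        ≤ C * (1 + |Real.log ρ|) := by
  have hh_half : ContDiffOn ℝ (⊤ : ℕ∞) h (Icc 0 (1 / 2)) :=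
    hh.mono (Icc_subset_Ico_right (by norm_num))
  obtain ⟨K, hlip⟩ := hh_half.exists_lipschitzOnWith (by simp) (convex_Icc _ _) isCompact_Icc
  set A := 4 * ((∫ x in Ioo 0 1, |h x|) + |h 0|) + |h 0|
  have hA : 0 ≤ A := by positivity
  refine ⟨1, one_pos, K + A + 1, by positivity, fun ρ ⟨hρ, hρ1⟩ => ?_⟩
  have hest := abs_integral_mul_singularKernel_sub_le hlip (by norm_num) hhint hρ
  rw [show ((1 / 2 : ℝ) ^ 2)⁻¹ = 4 by norm_num] at hest
  have hlog : log ((1 + ρ) / ρ) ≤ 1 + |log ρ| := by linarith [log_one_add_div_self_le hρ]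
  have hlog_nonneg : 0 ≤ |log ρ| := abs_nonneg _
  simp_rw [div_eq_mul_inv (h _)]
  calc _ ≤ K * log ((1 + ρ) / ρ) + A := hest
    _ ≤ K * (1 + |log ρ|) + A * (1 + |log ρ|) := by
        gcongr
        exact le_mul_of_one_le_right hA (by linarith)
    _ ≤ (K + A + 1) * (1 + |log ρ|) := by nlinarith
end

section
/- Let d ≥ 1 and let 𝒲 : ℝ × ℝ^d → ℝ be infinitely differentiable, writing 𝒲(v;p) and ∂_v for the partial derivative in the first variable. Suppose p* ∈ ℝ^d and real numbers v_{s*} < v_{0*} < v^{s*} satisfy: 𝒲(v_{0*};p*) < 𝒲(v_{s*};p*) = 𝒲(v^{s*};p*); ∂_v𝒲(v_{0*};p*) = ∂_v𝒲(v_{s*};p*) = 0; ∂_v²𝒲(v_{s*};p*) < 0; ∂_v²𝒲(v_{0*};p*) > 0; ∂_v𝒲(v;p*) < 0 for all v ∈ (v_{s*}, v_{0*}); and ∂_v𝒲(v;p*) > 0 for all v ∈ (v_{0*}, v^{s*}]. Then there exist an open neighborhood Λ of p* and infinitely differentiable functions v_s, v_0, v^s : Λ → ℝ with v_s(p*) =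 v_{s*}, v_0(p*) = v_{0*}, v^s(p*) = v^{s*}, such that for every p ∈ Λ: v_s(p) < v_0(p) < v^s(p); 𝒲(v_0(p);p) < 𝒲(v_s(p);p) = 𝒲(v^s(p);p); ∂_v𝒲(v_0(p);p) = ∂_v𝒲(v_s(p);p) = 0; ∂_v²𝒲(v_s(p);p) < 0; ∂_v²𝒲(v_0(p);p) > 0; ∂_v𝒲(v;p) < 0 for all v ∈ (v_s(p), v_0(p)); and ∂_v𝒲(v;p) > 0 for all v ∈ (v_0(p), v^s(p)]. -/
/-!
The points `vₛ`, `v₀` are nondegenerate zeros of `∂ᵥ𝒲(·; p*)` and `vˢ` is a transversal solution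
of `𝒲(v; p*) = 𝒲(vₛ; p*)`, so all three continue by the implicit function theorem. Smoothness at
`p*` alone does not give a `C^∞` function on a neighbourhood; instead, by local uniqueness, the
implicit function agrees near every nearby point with the implicit function constructed there.

The strict inequalities persist by continuity. For the sign conditions on the moving intervals:
near the moving zeros `vₛ(p)`, `v₀(p)` the function `∂ᵥ𝒲(·; p)` is strictly monotone, uniformly
in `p`, since `∂ᵥ²𝒲 ≠ 0` there; the rest of the interval stays in a fixed compact set on which
`∂ᵥ𝒲(·; p*)` has the required sign, and that sign persists by the tube lemma.
-/

open Set Filter Topology Function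
open scoped ContDiff

noncomputable def derivFst {α G : Type*} [NormedAddCommGroup G] [NormedSpace ℝ G]
    (F : ℝ → α → G) (v : ℝ) (p : α) : G :=
  deriv (fun v => F v p) v

section Smoothness

variable {E G : Type*} [NormedAddCommGroup E] [NormedSpace ℝ E] [NormedAddCommGroup G]
  [NormedSpace ℝ G] {F : ℝ → E → G}

theorem derivFst_eq_fderiv_apply {v : ℝ} {p : E} (hF : DifferentiableAt ℝ ↿F (v, p)) :
    derivFst F v p = fderiv ℝ ↿F (v, p) (1, 0) :=
  (hF.hasFDerivAt.comp_hasDerivAt (f := fun v : ℝ => (v, p)) v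
    ((hasDerivAt_id v).prodMk (hasDerivAt_const v p))).deriv

theorem ContDiffAt.uncurry_derivFst {m n : WithTop ℕ∞} {q : ℝ × E} (hF : ContDiffAt ℝ n ↿F q)
    (hmn : m + 1 ≤ n) : ContDiffAt ℝ m ↿(derivFst F) q := by
  have hdiff : ∀ᶠ x in 𝓝 q, DifferentiableAt ℝ ↿F x :=
    ((hF.of_le (le_trans le_add_self hmn)).eventually (by simp)).mono
      fun x hx => hx.differentiableAt one_ne_zero
  refine ((hF.fderiv_right hmn).clm_apply
    (contDiffAt_const (c := ((1 : ℝ), (0 : E))))).congr_of_eventuallyEq ?_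
  filter_upwards [hdiff] with x hx
  exact derivFst_eq_fderiv_apply hx

theorem ContDiff.uncurry_derivFst {m n : WithTop ℕ∞} (hF : ContDiff ℝ n ↿F) (hmn : m + 1 ≤ n) :
    ContDiff ℝ m ↿(derivFst F) :=
  contDiff_iff_contDiffAt.2 fun _ => hF.contDiffAt.uncurry_derivFst hmn

end Smoothness

theorem ContinuousLinearMap.isInvertible_of_apply_one_ne_zero {𝕜 : Type*} [Field 𝕜]
    [TopologicalSpace 𝕜] [IsTopologicalRing 𝕜] {L : 𝕜 →L[𝕜] 𝕜} (h : L 1 ≠ 0) : L.IsInvertible :=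
  ⟨ContinuousLinearEquiv.unitsEquivAut 𝕜 (Units.mk0 _ h), ContinuousLinearMap.ext_ring (by simp)⟩

section ImplicitFunction

variable {E : Type*} [NormedAddCommGroup E] [NormedSpace ℝ E] [CompleteSpace E] {F : ℝ → E → ℝ}
  {v₀ : ℝ} {p₀ : E} {n : WithTop ℕ∞}

theorem exists_implicit_contDiffAt (hF : ContDiffAt ℝ n ↿F (v₀, p₀)) (hn : n ≠ 0)
    (h : derivFst F v₀ p₀ ≠ 0) :
    ∃ ψ : E → ℝ, ψ p₀ = v₀ ∧ ContDiffAt ℝ n ψ p₀ ∧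
      ∀ᶠ q in 𝓝 (v₀, p₀), F q.1 q.2 = F v₀ p₀ ↔ ψ q.2 = q.1 := by
  set f : E × ℝ → ℝ := ↿F ∘ Prod.swap
  have hf : ContDiffAt ℝ n f (p₀, v₀) := hF.comp (p₀, v₀) (contDiffAt_snd.prodMk contDiffAt_fst)
  have hderiv : fderiv ℝ f (p₀, v₀) (0, 1) = derivFst F v₀ p₀ :=
    ((hf.differentiableAt hn).hasFDerivAt.comp_hasDerivAt (f := fun v : ℝ => (p₀, v)) v₀
      ((hasDerivAt_const v₀ p₀).prodMk (hasDerivAt_id v₀))).deriv.symm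
  have hinv : (fderiv ℝ f (p₀, v₀) ∘L .inr ℝ E ℝ).IsInvertible :=
    ContinuousLinearMap.isInvertible_of_apply_one_ne_zero (by simpa [hderiv] using h)
  refine ⟨hf.implicitFunction hn hinv, hf.implicitFunction_apply_self hn hinv,
    hf.contDiffAt_implicitFunction hn hinv, ?_⟩
  exact (continuous_swap.tendsto (v₀, p₀)).eventually
    (hf.eventually_apply_eq_iff_implicitFunction hn hinv)

theorem exists_implicit_eventually_contDiffAt (hF : ∀ᶠ q in 𝓝 (v₀, p₀), ContDiffAt ℝ n ↿F q)
    (hn : 1 ≤ n) (hF₀ : F v₀ p₀ = 0) (h : derivFst F v₀ p₀ ≠ 0) :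
    ∃ φ : E → ℝ, φ p₀ = v₀ ∧ ∀ᶠ p in 𝓝 p₀, ContDiffAt ℝ n φ p ∧ F (φ p) p = 0 := by
  have hn₀ : n ≠ 0 := (zero_lt_one.trans_le hn).ne'
  obtain ⟨φ, hφ₀, hφ, hφF⟩ := exists_implicit_contDiffAt hF.self_of_nhds hn₀ h
  have hF' : ContinuousAt ↿(derivFst F) (v₀, p₀) :=
    (hF.self_of_nhds.uncurry_derivFst (m := 0) (by simpa using hn)).continuousAt
  have hgood : ∀ᶠ q in 𝓝 (v₀, p₀), ∀ᶠ q' in 𝓝 q,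
      ContDiffAt ℝ n ↿F q' ∧ derivFst F q'.1 q'.2 ≠ 0 ∧ (F q'.1 q'.2 = 0 ↔ φ q'.2 = q'.1) := by
    refine (hF.and ((hF'.eventually_ne h).and ?_)).eventually_nhds
    simpa only [hF₀] using hφF
  have hgraph : Tendsto (fun p => (φ p, p)) (𝓝 p₀) (𝓝 (v₀, p₀)) := by
    simpa [hφ₀] using (hφ.continuousAt.prodMk continuousAt_id).tendsto
  refine ⟨φ, hφ₀, ?_⟩
  filter_upwards [hgraph.eventually hgood] with p₁ hp₁
  obtain ⟨hF₁, h₁, hφF₁⟩ := hp₁.self_of_nhds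
  have hzero : F (φ p₁) p₁ = 0 := hφF₁.2 rfl
  obtain ⟨ψ, hψ₀, hψ, hψF⟩ := exists_implicit_contDiffAt hF₁ hn₀ h₁
  have hgraphψ : Tendsto (fun p => (ψ p, p)) (𝓝 p₁) (𝓝 (φ p₁, p₁)) := by
    simpa [hψ₀] using (hψ.continuousAt.prodMk continuousAt_id).tendsto
  have hφψ : φ =ᶠ[𝓝 p₁] ψ := by
    filter_upwards [hgraphψ.eventually hp₁, hgraphψ.eventually hψF] with p hp hψp
    exact hp.2.2.1 (hzero ▸ hψp.2 rfl)
  exact ⟨hψ.congr_of_eventuallyEq hφψ, hzero⟩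

theorem exists_implicit_eventually_contDiffAt_level {W : ℝ → E → ℝ} (hW : ContDiff ℝ n ↿W)
    (hn : 1 ≤ n) {ψ : E → ℝ} (hψ : ∀ᶠ p in 𝓝 p₀, ContDiffAt ℝ n ψ p) (hW₀ : W v₀ p₀ = W (ψ p₀) p₀)
    (h : derivFst W v₀ p₀ ≠ 0) :
    ∃ φ : E → ℝ, φ p₀ = v₀ ∧ ∀ᶠ p in 𝓝 p₀, ContDiffAt ℝ n φ p ∧ W (φ p) p = W (ψ p) p := by
  have hF : ∀ᶠ q in 𝓝 (v₀, p₀), ContDiffAt ℝ n ↿(fun v p => W v p - W (ψ p) p) q := by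
    filter_upwards [(continuous_snd.tendsto (v₀, p₀)).eventually hψ] with q hq
    exact hW.contDiffAt.sub
      (hW.contDiffAt.comp q ((hq.comp q contDiffAt_snd).prodMk contDiffAt_snd))
  have h' : derivFst (fun v p => W v p - W (ψ p) p) v₀ p₀ ≠ 0 := by
    simpa only [derivFst, deriv_sub_const] using h
  obtain ⟨φ, hφ₀, hφ⟩ := exists_implicit_eventually_contDiffAt hF hn (sub_eq_zero.2 hW₀) h'
  exact ⟨φ, hφ₀, hφ.mono fun p hp => ⟨hp.1, sub_eq_zero.1 hp.2⟩⟩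

end ImplicitFunction

section SignPersistence

variable {X : Type*} [TopologicalSpace X] {F : ℝ → X → ℝ} {p₀ : X}

theorem Filter.Eventually.exists_forall_Icc {P : ℝ × X → Prop} {a : ℝ}
    (h : ∀ᶠ q in 𝓝 (a, p₀), P q) :
    ∃ δ > 0, ∀ᶠ p in 𝓝 p₀, ∀ v ∈ Icc (a - δ) (a + δ), P (v, p) := by
  rw [nhds_prod_eq, eventually_prod_iff] at h
  obtain ⟨pa, hpa, pb, hpb, hP⟩ := h
  obtain ⟨δ, hδ, hball⟩ := Metric.nhds_basis_closedBall.eventually_iff.1 hpa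
  exact ⟨δ, hδ, hpb.mono fun p hp v hv => hP (hball (by rwa [Real.closedBall_eq_Icc])) hp⟩

theorem IsCompact.eventually_forall_apply_mem {Y Z : Type*} [TopologicalSpace Y]
    [TopologicalSpace Z] {K : Set Y} (hK : IsCompact K) {f : Y → X → Z} (hf : Continuous ↿f)
    {s : Set Z} (hs : IsOpen s) (h : ∀ y ∈ K, f y p₀ ∈ s) :
    ∀ᶠ p in 𝓝 p₀, ∀ y ∈ K, f y p ∈ s :=
  hK.eventually_forall_of_forall_eventually fun y hy =>
    (hf.comp continuous_swap).continuousAt.eventually (hs.mem_nhds (h y hy))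

theorem Continuous.tendsto_apply_graph {Y Z : Type*} [TopologicalSpace Y] [TopologicalSpace Z]
    {f : Y → X → Z} (hf : Continuous ↿f) {φ : X → Y} {y : Y} (hφ : Tendsto φ (𝓝 p₀) (𝓝 y)) :
    Tendsto (fun p => f (φ p) p) (𝓝 p₀) (𝓝 (f y p₀)) :=
  (hf.tendsto (y, p₀)).comp (hφ.prodMk_nhds tendsto_id)

theorem exists_eventually_strictMonoOn_Icc {a : ℝ} (hF : Continuous ↿F)
    (hF' : ContinuousAt ↿(derivFst F) (a, p₀)) (h : 0 < derivFst F a p₀) :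
    ∃ δ > 0, ∀ᶠ p in 𝓝 p₀, StrictMonoOn (F · p) (Icc (a - δ) (a + δ)) := by
  obtain ⟨δ, hδ, hpos⟩ := (hF'.eventually (lt_mem_nhds h)).exists_forall_Icc
  exact ⟨δ, hδ, hpos.mono fun p hp => strictMonoOn_of_deriv_pos (convex_Icc _ _)
    (hF.uncurry_right p).continuousOn fun v hv => hp v (interior_subset hv)⟩

theorem exists_eventually_strictAntiOn_Icc {a : ℝ} (hF : Continuous ↿F)
    (hF' : ContinuousAt ↿(derivFst F) (a, p₀)) (h : derivFst F a p₀ < 0) :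
    ∃ δ > 0, ∀ᶠ p in 𝓝 p₀, StrictAntiOn (F · p) (Icc (a - δ) (a + δ)) := by
  obtain ⟨δ, hδ, hneg⟩ := (hF'.eventually (gt_mem_nhds h)).exists_forall_Icc
  exact ⟨δ, hδ, hneg.mono fun p hp => strictAntiOn_of_deriv_neg (convex_Icc _ _)
    (hF.uncurry_right p).continuousOn fun v hv => hp v (interior_subset hv)⟩

theorem eventually_forall_Ioo_neg (hF : Continuous ↿F) (hF' : Continuous ↿(derivFst F))
    {a b : ℝ} (hneg : ∀ v ∈ Ioo a b, F v p₀ < 0) (ha : derivFst F a p₀ < 0)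
    (hb : 0 < derivFst F b p₀) {α β : X → ℝ} (hα : Tendsto α (𝓝 p₀) (𝓝 a))
    (hβ : Tendsto β (𝓝 p₀) (𝓝 b)) (hαF : ∀ᶠ p in 𝓝 p₀, F (α p) p = 0)
    (hβF : ∀ᶠ p in 𝓝 p₀, F (β p) p = 0) :
    ∀ᶠ p in 𝓝 p₀, ∀ v ∈ Ioo (α p) (β p), F v p < 0 := by
  obtain ⟨δ, hδ, hanti⟩ := exists_eventually_strictAntiOn_Icc hF hF'.continuousAt ha
  obtain ⟨ε, hε, hmono⟩ := exists_eventually_strictMonoOn_Icc hF hF'.continuousAt hb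
  have hmid : ∀ᶠ p in 𝓝 p₀, ∀ v ∈ Icc (a + δ) (b - ε), F v p < 0 :=
    isCompact_Icc.eventually_forall_apply_mem hF isOpen_Iio fun v hv =>
      hneg v ⟨by linarith [hv.1], by linarith [hv.2]⟩
  have hαI : ∀ᶠ p in 𝓝 p₀, α p ∈ Ioo (a - δ) (a + δ) :=
    hα (Ioo_mem_nhds (by linarith) (by linarith))
  have hβI : ∀ᶠ p in 𝓝 p₀, β p ∈ Ioo (b - ε) (b + ε) :=
    hβ (Ioo_mem_nhds (by linarith) (by linarith))
  filter_upwards [hanti, hmono, hmid, hαI, hβI, hαF, hβF]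
    with p hanti hmono hmid ⟨hα₁, hα₂⟩ ⟨hβ₁, hβ₂⟩ hαF hβF v ⟨hv₁, hv₂⟩
  by_cases h₁ : v ≤ a + δ
  · exact (hanti ⟨hα₁.le, hα₂.le⟩ ⟨by linarith, h₁⟩ hv₁).trans_eq hαF
  by_cases h₂ : b - ε ≤ v
  · exact (hmono ⟨h₂, by linarith⟩ ⟨hβ₁.le, hβ₂.le⟩ hv₂).trans_eq hβF
  exact hmid v ⟨by linarith, by linarith⟩

theorem eventually_forall_Ioc_pos (hF : Continuous ↿F) (hF' : Continuous ↿(derivFst F))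
    {a b : ℝ} (hab : a < b) (hpos : ∀ v ∈ Ioc a b, 0 < F v p₀) (ha : 0 < derivFst F a p₀)
    {α β : X → ℝ} (hα : Tendsto α (𝓝 p₀) (𝓝 a)) (hβ : Tendsto β (𝓝 p₀) (𝓝 b))
    (hαF : ∀ᶠ p in 𝓝 p₀, F (α p) p = 0) :
    ∀ᶠ p in 𝓝 p₀, ∀ v ∈ Ioc (α p) (β p), 0 < F v p := by
  obtain ⟨δ, hδ, hmono⟩ := exists_eventually_strictMonoOn_Icc hF hF'.continuousAt ha
  obtain ⟨ε, hε, hright⟩ :=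
    (hF.continuousAt.eventually (lt_mem_nhds (hpos b ⟨hab, le_rfl⟩))).exists_forall_Icc
  have hmid : ∀ᶠ p in 𝓝 p₀, ∀ v ∈ Icc (a + δ) b, 0 < F v p :=
    isCompact_Icc.eventually_forall_apply_mem hF isOpen_Ioi fun v hv =>
      hpos v ⟨by linarith [hv.1], hv.2⟩
  have hαI : ∀ᶠ p in 𝓝 p₀, α p ∈ Ioo (a - δ) (a + δ) :=
    hα (Ioo_mem_nhds (by linarith) (by linarith))
  have hβI : ∀ᶠ p in 𝓝 p₀, β p < b + ε := hβ (Iio_mem_nhds (by linarith))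
  filter_upwards [hmono, hright, hmid, hαI, hβI, hαF]
    with p hmono hright hmid ⟨hα₁, hα₂⟩ hβ hαF v ⟨hv₁, hv₂⟩
  by_cases h₁ : v ≤ a + δ
  · exact hαF.symm.trans_lt (hmono ⟨hα₁.le, hα₂.le⟩ ⟨by linarith, h₁⟩ hv₁)
  by_cases h₂ : v ≤ b
  · exact hmid v ⟨by linarith, h₂⟩
  exact hright v ⟨by linarith, by linarith⟩

end SignPersistence

theorem phase_portrait_persistence_general
    (d : ℕ)
    (𝒲 : ℝ → (Fin d → ℝ) → ℝ)
    (h𝒲 : ContDiff ℝ (⊤ : ℕ∞) (fun q : ℝ × (Fin d → ℝ) => 𝒲 q.1 q.2))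
    (pstar : Fin d → ℝ) (vsstar v0star vSstar : ℝ)
    (horder1 : vsstar < v0star) (horder2 : v0star < vSstar)
    (hval1 : 𝒲 v0star pstar < 𝒲 vsstar pstar)
    (hval2 : 𝒲 vsstar pstar = 𝒲 vSstar pstar)
    (hcrit0 : deriv (fun v => 𝒲 v pstar) v0star = 0)
    (hcrits : deriv (fun v => 𝒲 v pstar) vsstar = 0)
    (hs2 : deriv (deriv (fun v => 𝒲 v pstar)) vsstar < 0)
    (h02 : 0 < deriv (deriv (fun v => 𝒲 v pstar)) v0star)
    (hneg : ∀ v ∈ Set.Ioo vsstar v0star, deriv (fun v => 𝒲 v pstar) v < 0)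
    (hpos : ∀ v ∈ Set.Ioc v0star vSstar, 0 < deriv (fun v => 𝒲 v pstar) v) :
    ∃ Λ : Set (Fin d → ℝ), IsOpen Λ ∧ pstar ∈ Λ ∧
      ∃ vs v0 vS : (Fin d → ℝ) → ℝ,
        ContDiffOn ℝ (⊤ : ℕ∞) vs Λ ∧ ContDiffOn ℝ (⊤ : ℕ∞) v0 Λ ∧
        ContDiffOn ℝ (⊤ : ℕ∞) vS Λ ∧
        vs pstar = vsstar ∧ v0 pstar = v0star ∧ vS pstar = vSstar ∧
        ∀ p ∈ Λ,
          (vs p < v0 p ∧ v0 p < vS p) ∧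
          (𝒲 (v0 p) p < 𝒲 (vs p) p ∧ 𝒲 (vs p) p = 𝒲 (vS p) p) ∧
          deriv (fun v => 𝒲 v p) (v0 p) = 0 ∧
          deriv (fun v => 𝒲 v p) (vs p) = 0 ∧
          deriv (deriv (fun v => 𝒲 v p)) (vs p) < 0 ∧
          0 < deriv (deriv (fun v => 𝒲 v p)) (v0 p) ∧
          (∀ v ∈ Set.Ioo (vs p) (v0 p), deriv (fun v => 𝒲 v p) v < 0) ∧
          (∀ v ∈ Set.Ioc (v0 p) (vS p), 0 < deriv (fun v => 𝒲 v p) v) := by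
  have hW : ContDiff ℝ ∞ ↿𝒲 := h𝒲
  have hW' : ContDiff ℝ ∞ ↿(derivFst 𝒲) := hW.uncurry_derivFst le_rfl
  have hW'' : ContDiff ℝ ∞ ↿(derivFst (derivFst 𝒲)) := hW'.uncurry_derivFst le_rfl
  have hone : (1 : WithTop ℕ∞) ≤ ∞ := by exact_mod_cast le_top
  obtain ⟨vs, hvs, hvs_ev⟩ := exists_implicit_eventually_contDiffAt
    (.of_forall fun _ => hW'.contDiffAt) hone hcrits hs2.ne
  obtain ⟨v0, hv0, hv0_ev⟩ := exists_implicit_eventually_contDiffAt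
    (.of_forall fun _ => hW'.contDiffAt) hone hcrit0 h02.ne'
  obtain ⟨vS, hvS, hvS_ev⟩ := exists_implicit_eventually_contDiffAt_level hW hone
    (hvs_ev.mono fun _ h => h.1) (by rw [hvs, hval2]) (hpos vSstar ⟨horder2, le_rfl⟩).ne'
  have tvs : Tendsto vs (𝓝 pstar) (𝓝 vsstar) := hvs ▸ hvs_ev.self_of_nhds.1.continuousAt.tendsto
  have tv0 : Tendsto v0 (𝓝 pstar) (𝓝 v0star) := hv0 ▸ hv0_ev.self_of_nhds.1.continuousAt.tendsto
  have tvS : Tendsto vS (𝓝 pstar) (𝓝 vSstar) := hvS ▸ hvS_ev.self_of_nhds.1.continuousAt.tendsto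
  have horder := (tvs.eventually_lt tv0 horder1).and (tv0.eventually_lt tvS horder2)
  have hval := (hW.continuous.tendsto_apply_graph tv0).eventually_lt
    (hW.continuous.tendsto_apply_graph tvs) hval1
  have hsaddle := (hW''.continuous.tendsto_apply_graph tvs).eventually (gt_mem_nhds hs2)
  have hcenter := (hW''.continuous.tendsto_apply_graph tv0).eventually (lt_mem_nhds h02)
  have hneg' := eventually_forall_Ioo_neg hW'.continuous hW''.continuous hneg hs2 h02 tvs tv0
    (hvs_ev.mono fun _ h => h.2) (hv0_ev.mono fun _ h => h.2)
  have hpos' := eventually_forall_Ioc_pos hW'.continuous hW''.continuous horder2 hpos h02 tv0 tvS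
    (hv0_ev.mono fun _ h => h.2)
  obtain ⟨Λ, hΛ, hΛ_open, hpΛ⟩ := eventually_nhds_iff.1 <| hvs_ev.and <| hv0_ev.and <|
    hvS_ev.and <| horder.and <| hval.and <| hsaddle.and <| hcenter.and <| hneg'.and hpos'
  refine ⟨Λ, hΛ_open, hpΛ, vs, v0, vS, fun p hp => (hΛ p hp).1.1.contDiffWithinAt,
    fun p hp => (hΛ p hp).2.1.1.contDiffWithinAt, fun p hp => (hΛ p hp).2.2.1.1.contDiffWithinAt,
    hvs, hv0, hvS, fun p hp => ?_⟩
  obtain ⟨⟨-, hvs_p⟩, ⟨-, hv0_p⟩, ⟨-, hvS_p⟩, hord, h₃, h₄, h₅, h₆, h₇⟩ := hΛ p hp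
  exact ⟨hord, ⟨h₃, hvS_p.symm⟩, hv0_p, hvs_p, h₄, h₅, h₆, h₇⟩

/-- Persistence of the basic phase portrait (Proposition on perturbation of the
potential): the center `v₀`, the saddle `vₛ` and the conjugate point `vˢ` persist
smoothly under perturbation of the parameters. -/
theorem phase_portrait_persistence
    (d : ℕ) (hd : 1 ≤ d)
    (𝒲 : ℝ → (Fin d → ℝ) → ℝ)
    (h𝒲 : ContDiff ℝ (⊤ : ℕ∞) (fun q : ℝ × (Fin d → ℝ) => 𝒲 q.1 q.2))
    (pstar : Fin d → ℝ) (vsstar v0star vSstar : ℝ)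
    (horder1 : vsstar < v0star) (horder2 : v0star < vSstar)
    (hval1 : 𝒲 v0star pstar < 𝒲 vsstar pstar)
    (hval2 : 𝒲 vsstar pstar = 𝒲 vSstar pstar)
    (hcrit0 : deriv (fun v => 𝒲 v pstar) v0star = 0)
    (hcrits : deriv (fun v => 𝒲 v pstar) vsstar = 0)
    (hs2 : deriv (deriv (fun v => 𝒲 v pstar)) vsstar < 0)
    (h02 : 0 < deriv (deriv (fun v => 𝒲 v pstar)) v0star)
    (hneg : ∀ v ∈ Set.Ioo vsstar v0star, deriv (fun v => 𝒲 v pstar) v < 0)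
    (hpos : ∀ v ∈ Set.Ioc v0star vSstar, 0 < deriv (fun v => 𝒲 v pstar) v) :
    ∃ Λ : Set (Fin d → ℝ), IsOpen Λ ∧ pstar ∈ Λ ∧
      ∃ vs v0 vS : (Fin d → ℝ) → ℝ,
        ContDiffOn ℝ (⊤ : ℕ∞) vs Λ ∧ ContDiffOn ℝ (⊤ : ℕ∞) v0 Λ ∧
        ContDiffOn ℝ (⊤ : ℕ∞) vS Λ ∧
        vs pstar = vsstar ∧ v0 pstar = v0star ∧ vS pstar = vSstar ∧
        ∀ p ∈ Λ,
          (vs p < v0 p ∧ v0 p < vS p) ∧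
          (𝒲 (v0 p) p < 𝒲 (vs p) p ∧ 𝒲 (vs p) p = 𝒲 (vS p) p) ∧
          deriv (fun v => 𝒲 v p) (v0 p) = 0 ∧
          deriv (fun v => 𝒲 v p) (vs p) = 0 ∧
          deriv (deriv (fun v => 𝒲 v p)) (vs p) < 0 ∧
          0 < deriv (deriv (fun v => 𝒲 v p)) (v0 p) ∧
          (∀ v ∈ Set.Ioo (vs p) (v0 p), deriv (fun v => 𝒲 v p) v < 0) ∧
          (∀ v ∈ Set.Ioc (v0 p) (vS p), 0 < deriv (fun v => 𝒲 v p) v) :=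
  phase_portrait_persistence_general d 𝒲 h𝒲 pstar vsstar v0star vSstar horder1 horder2 hval1 hval2
    hcrit0 hcrits hs2 h02 hneg hpos
end

section
/- In the harmonic (small amplitude) setting, for every continuous function φ : (A,B) → ℝ one has lim_{μ → μ₀⁺} ∫_{v₂(μ)}^{v₃(μ)} φ(v)/√(μ − W(v)) dv = π · φ(v₀) · √(2/W''(v₀)). -/
/-!
For `c₁ < W''(v₀)/2 < c₂`, the functions `W - c₁ (· - v₀)²` and `c₂ (· - v₀)² - W` have a
nondegenerate minimum at `v₀`, so they increase away from `v₀` on a neighbourhood. Hence on the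
half-orbit between `v₀` and a turning point `e` (with `W e = μ`) one has
`c₁ ((e - v₀)² - (v - v₀)²) ≤ μ - W v ≤ c₂ ((e - v₀)² - (v - v₀)²)`, and since
`∫ dv / √(r² - (v - v₀)²) = π/2` over a half-interval of length `r`, whatever `r` is, the period
`∫ dv / √(μ - W v)` is eventually squeezed between `π/√c₂` and `π/√c₁`; it therefore tends to
`π √(2/W''(v₀))`. The turning points tend to `v₀`, so the weight `1/√(μ - W)` concentrates
at `v₀` and the integral of `φ` against it behaves like `φ(v₀)` times the period.
-/

open MeasureTheory Set Filter Topology Real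

theorem integral_one_div_sqrt_sq_sub_sq {x₀ r l u : ℝ} (hr : 0 < r) (hl : x₀ - r ≤ l)
    (hlu : l ≤ u) (hu : u ≤ x₀ + r) :
    IntegrableOn (fun v => 1 / √(r ^ 2 - (v - x₀) ^ 2)) (Ioo l u) ∧
      ∫ v in Ioo l u, 1 / √(r ^ 2 - (v - x₀) ^ 2) =
        arcsin ((u - x₀) / r) - arcsin ((l - x₀) / r) := by
  have hderiv : ∀ v ∈ Ioo l u, HasDerivAt (fun v => arcsin ((v - x₀) / r))
      (1 / √(r ^ 2 - (v - x₀) ^ 2)) v := by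
    rintro v ⟨hlv, hvu⟩
    have h₁ : -1 < (v - x₀) / r := by rw [lt_div_iff₀ hr]; linarith
    have h₂ : (v - x₀) / r < 1 := by rw [div_lt_iff₀ hr]; linarith
    refine ((hasDerivAt_arcsin h₁.ne' h₂.ne).comp v
      (((hasDerivAt_id v).sub_const x₀).div_const r)).congr_deriv ?_
    rw [show r ^ 2 - (v - x₀) ^ 2 = r ^ 2 * (1 - ((v - x₀) / r) ^ 2) by field_simp,
      sqrt_mul (sq_nonneg r), sqrt_sq hr.le]
    field_simp
  have hcont : ContinuousOn (fun v => arcsin ((v - x₀) / r)) (Icc l u) := by fun_prop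
  have hint : IntegrableOn (fun v => 1 / √(r ^ 2 - (v - x₀) ^ 2)) (Ioc l u) :=
    intervalIntegral.integrableOn_deriv_of_nonneg hcont hderiv fun v _ => by positivity
  refine ⟨hint.mono_set Ioo_subset_Ioc_self, ?_⟩
  rw [← integral_Ioc_eq_integral_Ioo, ← intervalIntegral.integral_of_le hlu]
  exact intervalIntegral.integral_eq_sub_of_hasDerivAt_of_le hlu hcont hderiv
    ((intervalIntegrable_iff_integrableOn_Ioc_of_le hlu).2 hint)

theorem integral_uIoo_one_div_sqrt_sq_sub_sq {x₀ e : ℝ} (he : x₀ ≠ e) :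
    IntegrableOn (fun v => 1 / √((e - x₀) ^ 2 - (v - x₀) ^ 2)) (uIoo x₀ e) ∧
      ∫ v in uIoo x₀ e, 1 / √((e - x₀) ^ 2 - (v - x₀) ^ 2) = π / 2 := by
  rcases he.lt_or_gt with h | h
  · have hr : 0 < e - x₀ := sub_pos.2 h
    rw [uIoo_of_le h.le]
    convert integral_one_div_sqrt_sq_sub_sq (x₀ := x₀) hr (by linarith) h.le (by linarith) using 2
    simp [div_self hr.ne']
  · have hr : 0 < x₀ - e := sub_pos.2 h
    rw [uIoo_of_ge h.le, ← neg_sq (e - x₀), neg_sub]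
    convert integral_one_div_sqrt_sq_sub_sq (x₀ := x₀) hr (by linarith) h.le (by linarith) using 2
    rw [show e - x₀ = -(x₀ - e) by ring, neg_div, div_self hr.ne']
    simp

theorem integral_one_div_sqrt_mem_Icc_of_le_mul {s : Set ℝ} {g k : ℝ → ℝ} {c₁ c₂ : ℝ}
    (hs : MeasurableSet s) (hc₁ : 0 < c₁) (hg : ContinuousOn g s)
    (hk : IntegrableOn (fun v => 1 / √(k v)) s) (hk₀ : ∀ v ∈ s, 0 < k v)
    (h₁ : ∀ v ∈ s, c₁ * k v ≤ g v) (h₂ : ∀ v ∈ s, g v ≤ c₂ * k v) :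
    IntegrableOn (fun v => 1 / √(g v)) s ∧
      ∫ v in s, 1 / √(g v) ∈
        Icc ((∫ v in s, 1 / √(k v)) / √c₂) ((∫ v in s, 1 / √(k v)) / √c₁) := by
  have hg₀ : ∀ v ∈ s, 0 < g v := fun v hv => (mul_pos hc₁ (hk₀ v hv)).trans_le (h₁ v hv)
  have hup : ∀ v ∈ s, 1 / √(g v) ≤ 1 / √(k v) / √c₁ := fun v hv => by
    rw [div_div, ← sqrt_mul (hk₀ v hv).le]
    exact one_div_le_one_div_of_le (sqrt_pos.2 (mul_pos (hk₀ v hv) hc₁))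
      (sqrt_le_sqrt (by linarith [h₁ v hv]))
  have hlow : ∀ v ∈ s, 1 / √(k v) / √c₂ ≤ 1 / √(g v) := fun v hv => by
    rw [div_div, ← sqrt_mul (hk₀ v hv).le]
    exact one_div_le_one_div_of_le (sqrt_pos.2 (hg₀ v hv)) (sqrt_le_sqrt (by linarith [h₂ v hv]))
  have hint : IntegrableOn (fun v => 1 / √(g v)) s := by
    refine (hk.div_const √c₁).mono' ?_ (ae_restrict_of_forall_mem hs fun v hv => ?_)
    · exact (continuousOn_const.div hg.sqrt fun v hv =>
        (sqrt_pos.2 (hg₀ v hv)).ne').aestronglyMeasurable hs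
    · rw [norm_of_nonneg (by positivity)]
      exact hup v hv
  refine ⟨hint, ?_, ?_⟩
  · rw [← integral_div]
    exact setIntegral_mono_on (hk.div_const _) hint hs hlow
  · rw [← integral_div]
    exact setIntegral_mono_on hint (hk.div_const _) hs hup

theorem integral_one_div_sqrt_sub_mem_Icc {W : ℝ → ℝ} {x₀ e c₁ c₂ : ℝ} (he : x₀ ≠ e)
    (hc₁ : 0 < c₁) (hW : ∀ v ∈ uIcc x₀ e, ContinuousAt W v)
    (h₁ : ∀ v ∈ uIcc x₀ e, W v - c₁ * (v - x₀) ^ 2 ≤ W e - c₁ * (e - x₀) ^ 2)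
    (h₂ : ∀ v ∈ uIcc x₀ e, c₂ * (v - x₀) ^ 2 - W v ≤ c₂ * (e - x₀) ^ 2 - W e) :
    IntegrableOn (fun v => 1 / √(W e - W v)) (uIoo x₀ e) ∧
      ∫ v in uIoo x₀ e, 1 / √(W e - W v) ∈ Icc (π / 2 / √c₂) (π / 2 / √c₁) := by
  obtain ⟨hk, hK⟩ := integral_uIoo_one_div_sqrt_sq_sub_sq he
  have hsub : uIoo x₀ e ⊆ uIcc x₀ e := Ioo_subset_Icc_self
  rw [← hK]
  refine integral_one_div_sqrt_mem_Icc_of_le_mul measurableSet_Ioo hc₁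
    (fun v hv => (continuousAt_const.sub (hW v (hsub hv))).continuousWithinAt) hk
    (fun v hv => ?_) (fun v hv => by linarith [h₁ v (hsub hv)])
    (fun v hv => by linarith [h₂ v (hsub hv)])
  rcases le_total x₀ e with h | h
  · rw [uIoo_of_le h] at hv
    nlinarith [hv.1, hv.2]
  · rw [uIoo_of_ge h] at hv
    nlinarith [hv.1, hv.2]

theorem Filter.Eventually.forall_mem_uIcc {p : ℝ → Prop} {x₀ : ℝ} (h : ∀ᶠ x in 𝓝 x₀, p x) :
    ∀ᶠ e in 𝓝 x₀, ∀ v ∈ uIcc x₀ e, p v := by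
  obtain ⟨ε, hε, hball⟩ := Metric.eventually_nhds_iff.1 h
  filter_upwards [Metric.ball_mem_nhds x₀ hε] with e he v hv
  exact hball ((abs_sub_left_of_mem_uIcc hv).trans_lt he)

theorem eventually_forall_mem_uIcc_le_of_hasDerivAt_pos {f f' : ℝ → ℝ} {x₀ b : ℝ}
    (hf : ∀ᶠ x in 𝓝 x₀, HasDerivAt f (f' x) x) (hf'₀ : f' x₀ = 0) (hf' : HasDerivAt f' b x₀)
    (hb : 0 < b) : ∀ᶠ e in 𝓝 x₀, ∀ v ∈ uIcc x₀ e, f v ≤ f e := by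
  have hsign : ∀ᶠ x in 𝓝 x₀, x ≠ x₀ → 0 < (x - x₀) * f' x := by
    have hslope := (hasDerivAt_iff_tendsto_slope.1 hf').eventually (lt_mem_nhds hb)
    filter_upwards [eventually_nhdsWithin_iff.1 hslope] with x hx hne
    have hx₀ : x - x₀ ≠ 0 := sub_ne_zero.2 hne
    have hpos := hx hne
    rw [slope_def_field, hf'₀, sub_zero] at hpos
    calc 0 < f' x / (x - x₀) * (x - x₀) ^ 2 := mul_pos hpos (pow_two_pos_of_ne_zero hx₀)
      _ = (x - x₀) * f' x := by field_simp
  filter_upwards [(hf.and hsign).forall_mem_uIcc] with e he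
  have hderiv : ∀ v ∈ uIcc x₀ e, HasDerivWithinAt f (f' v) (interior (uIcc x₀ e)) v :=
    fun v hv => (he v hv).1.hasDerivWithinAt
  have hcont : ContinuousOn f (uIcc x₀ e) := fun v hv => (he v hv).1.continuousAt.continuousWithinAt
  rcases le_total x₀ e with h | h
  · rw [uIcc_of_le h] at he hderiv hcont ⊢
    have hmono : MonotoneOn f (Icc x₀ e) := monotoneOn_of_hasDerivWithinAt_nonneg (convex_Icc _ _)
      hcont (fun v hv => hderiv v (interior_subset hv)) fun v hv => by
        rw [interior_Icc] at hv
        exact (pos_of_mul_pos_right ((he v (Ioo_subset_Icc_self hv)).2 hv.1.ne')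
          (sub_pos.2 hv.1).le).le
    exact fun v hv => hmono hv (right_mem_Icc.2 h) hv.2
  · rw [uIcc_of_ge h] at he hderiv hcont ⊢
    have hanti : AntitoneOn f (Icc e x₀) := antitoneOn_of_hasDerivWithinAt_nonpos (convex_Icc _ _)
      hcont (fun v hv => hderiv v (interior_subset hv)) fun v hv => by
        rw [interior_Icc] at hv
        exact (neg_of_mul_pos_right ((he v (Ioo_subset_Icc_self hv)).2 hv.2.ne)
          (sub_neg.2 hv.2).le).le
    exact fun v hv => hanti (left_mem_Icc.2 h) hv hv.1

theorem ContDiffOn.eventually_hasDerivAt_and_hasDerivAt_deriv {f : ℝ → ℝ} {s : Set ℝ} {x : ℝ}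
    (hf : ContDiffOn ℝ 2 f s) (hs : IsOpen s) (hx : x ∈ s) :
    (∀ᶠ y in 𝓝 x, HasDerivAt f (deriv f y) y) ∧ HasDerivAt (deriv f) (deriv (deriv f) x) x := by
  have hf' : ContDiffOn ℝ 1 (deriv f) s := hf.deriv_of_isOpen hs (by norm_num)
  exact ⟨(hs.eventually_mem hx).mono fun y hy =>
      ((hf.differentiableOn (by norm_num)).differentiableAt (hs.mem_nhds hy)).hasDerivAt,
    ((hf'.differentiableOn one_ne_zero).differentiableAt (hs.mem_nhds hx)).hasDerivAt⟩

theorem tendsto_nhds_of_strictMonoOn {W v : ℝ → ℝ} {x₀ B : ℝ} (hW : StrictMonoOn W (Ico x₀ B))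
    (hv : ∀ᶠ μ in 𝓝[>] W x₀, v μ ∈ Ioo x₀ B ∧ W (v μ) = μ) :
    Tendsto v (𝓝[>] W x₀) (𝓝 x₀) := by
  refine tendsto_order.2 ⟨fun b hb => hv.mono fun μ hμ => hb.trans hμ.1.1, fun b hb => ?_⟩
  obtain ⟨μ, hμ, -⟩ := hv.exists
  obtain ⟨b', hxb', hb'⟩ := exists_between (lt_min hb (hμ.1.trans hμ.2))
  have hb'W : b' ∈ Ico x₀ B := ⟨hxb'.le, hb'.trans_le (min_le_right _ _)⟩
  have hlt : ∀ᶠ μ in 𝓝[>] W x₀, μ < W b' :=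
    nhdsWithin_le_nhds (eventually_lt_nhds (hW (left_mem_Ico.2 (hxb'.trans hb'W.2)) hb'W hxb'))
  filter_upwards [hv, hlt] with μ ⟨hvμ, hWμ⟩ hμ
  rw [← hWμ, hW.lt_iff_lt ⟨hvμ.1.le, hvμ.2⟩ hb'W] at hμ
  exact hμ.trans (hb'.trans_le (min_le_left _ _))

theorem tendsto_nhds_of_strictAntiOn {W v : ℝ → ℝ} {A x₀ : ℝ} (hW : StrictAntiOn W (Ioc A x₀))
    (hv : ∀ᶠ μ in 𝓝[>] W x₀, v μ ∈ Ioo A x₀ ∧ W (v μ) = μ) :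
    Tendsto v (𝓝[>] W x₀) (𝓝 x₀) := by
  have hW' : StrictMonoOn (fun x => W (-x)) (Ico (-x₀) (-A)) := fun x hx y hy hxy =>
    hW ⟨lt_neg_of_lt_neg hy.2, neg_le.1 hy.1⟩ ⟨lt_neg_of_lt_neg hx.2, neg_le.1 hx.1⟩
      (neg_lt_neg hxy)
  have hv' : ∀ᶠ μ in 𝓝[>] W (-(-x₀)), -v μ ∈ Ioo (-x₀) (-A) ∧ W (-(-v μ)) = μ := by
    simpa only [neg_neg, mem_Ioo, neg_lt_neg_iff, and_comm] using hv
  simpa using (tendsto_nhds_of_strictMonoOn hW' hv').neg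

theorem tendsto_of_eventually_mem_Icc {ι : Type*} {l : Filter ι} {f : ι → ℝ} {F : ℝ → ℝ} {x₀ : ℝ}
    (hF : ContinuousAt F x₀)
    (h : ∀ᶠ c₁ in 𝓝[<] x₀, ∀ᶠ c₂ in 𝓝[>] x₀, ∀ᶠ i in l, f i ∈ Icc (F c₂) (F c₁)) :
    Tendsto f l (𝓝 (F x₀)) := by
  refine tendsto_order.2 ⟨fun b hb => ?_, fun b hb => ?_⟩
  · obtain ⟨c₁, hc₁⟩ := h.exists
    obtain ⟨c₂, hbc₂, hc₂⟩ :=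
      (((hF.eventually (lt_mem_nhds hb)).filter_mono nhdsWithin_le_nhds).and hc₁).exists
    exact hc₂.mono fun i hi => hbc₂.trans_le hi.1
  · obtain ⟨c₁, hbc₁, hc₁⟩ :=
      (((hF.eventually (gt_mem_nhds hb)).filter_mono nhdsWithin_le_nhds).and h).exists
    obtain ⟨c₂, hc₂⟩ := hc₁.exists
    exact hc₂.mono fun i hi => hi.2.trans_lt hbc₁

theorem integrableOn_Ioo_and_integral_Ioo_eq_add {f : ℝ → ℝ} {l m u : ℝ} (hlm : l < m)
    (hmu : m ≤ u) (h₁ : IntegrableOn f (Ioo l m)) (h₂ : IntegrableOn f (Ioo m u)) :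
    IntegrableOn f (Ioo l u) ∧
      ∫ x in Ioo l u, f x = (∫ x in Ioo l m, f x) + ∫ x in Ioo m u, f x := by
  rw [← integrableOn_Ico_iff_integrableOn_Ioo] at h₂
  rw [← integral_Ico_eq_integral_Ioo (x := m), ← Ioo_union_Ico_eq_Ioo hlm hmu]
  exact ⟨h₁.union h₂, setIntegral_union (disjoint_left.2 fun x hx hx' => hx.2.not_ge hx'.1)
    measurableSet_Ico h₁ h₂⟩

section HarmonicPeriod

variable {l : Filter ℝ} {W v₂ v₃ : ℝ → ℝ} {v₀ a : ℝ}

theorem eventually_integral_one_div_sqrt_mem_Icc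
    (hW : ∀ᶠ v in 𝓝 v₀, HasDerivAt W (deriv W v) v) (hW₁ : deriv W v₀ = 0)
    (hW₂ : HasDerivAt (deriv W) a v₀)
    (hv : ∀ᶠ μ in l, v₂ μ < v₀ ∧ v₀ < v₃ μ ∧ W (v₂ μ) = μ ∧ W (v₃ μ) = μ)
    (hv₂ : Tendsto v₂ l (𝓝 v₀)) (hv₃ : Tendsto v₃ l (𝓝 v₀))
    {c₁ c₂ : ℝ} (hc₁ : 0 < c₁) (hc₁a : c₁ < a / 2) (hc₂a : a / 2 < c₂) :
    ∀ᶠ μ in l, IntegrableOn (fun v => 1 / √(μ - W v)) (Ioo (v₂ μ) (v₃ μ)) ∧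
      ∫ v in Ioo (v₂ μ) (v₃ μ), 1 / √(μ - W v) ∈ Icc (π / √c₂) (π / √c₁) := by
  have hsq : ∀ c v, HasDerivAt (fun v => c * (v - v₀) ^ 2) (2 * c * (v - v₀)) v := fun c v =>
    ((((hasDerivAt_id v).sub_const v₀).pow 2).const_mul c).congr_deriv (by simp; ring)
  have hlin : ∀ c, HasDerivAt (fun v => 2 * c * (v - v₀)) (2 * c) v₀ := fun c =>
    (((hasDerivAt_id v₀).sub_const v₀).const_mul (2 * c)).congr_deriv (mul_one _)
  have hlow := eventually_forall_mem_uIcc_le_of_hasDerivAt_pos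
    (f := fun v => W v - c₁ * (v - v₀) ^ 2) (f' := fun v => deriv W v - 2 * c₁ * (v - v₀))
    (hW.mono fun v hv => hv.sub (hsq c₁ v)) (by simp [hW₁]) (hW₂.sub (hlin c₁)) (by linarith)
  have hup := eventually_forall_mem_uIcc_le_of_hasDerivAt_pos
    (f := fun v => c₂ * (v - v₀) ^ 2 - W v) (f' := fun v => 2 * c₂ * (v - v₀) - deriv W v)
    (hW.mono fun v hv => (hsq c₂ v).sub hv) (by simp [hW₁]) ((hlin c₂).sub hW₂) (by linarith)
  have hhalf : ∀ᶠ e in 𝓝 v₀, e ≠ v₀ → IntegrableOn (fun v => 1 / √(W e - W v)) (uIoo v₀ e) ∧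
      ∫ v in uIoo v₀ e, 1 / √(W e - W v) ∈ Icc (π / 2 / √c₂) (π / 2 / √c₁) := by
    filter_upwards [hlow, hup, (hW.mono fun v hv => hv.continuousAt).forall_mem_uIcc]
      with e h₁ h₂ hc he
    exact integral_one_div_sqrt_sub_mem_Icc he.symm hc₁ hc h₁ h₂
  filter_upwards [hv, hv₂.eventually hhalf, hv₃.eventually hhalf] with μ ⟨h₂₀, h₀₃, hμ₂, hμ₃⟩ hL hR
  obtain ⟨hLi, hLb⟩ := hL h₂₀.ne
  obtain ⟨hRi, hRb⟩ := hR h₀₃.ne'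
  rw [hμ₂, uIoo_comm, uIoo_of_le h₂₀.le] at hLi hLb
  rw [hμ₃, uIoo_of_le h₀₃.le] at hRi hRb
  obtain ⟨hi, hsum⟩ := integrableOn_Ioo_and_integral_Ioo_eq_add h₂₀ h₀₃.le hLi hRi
  have hhalves : ∀ c, π / 2 / √c + π / 2 / √c = π / √c := fun c => by ring
  refine ⟨hi, ?_⟩
  rw [hsum, mem_Icc]
  constructor <;> linarith [hLb.1, hLb.2, hRb.1, hRb.2, hhalves c₁, hhalves c₂]

theorem tendsto_integral_one_div_sqrt
    (hW : ∀ᶠ v in 𝓝 v₀, HasDerivAt W (deriv W v) v) (hW₁ : deriv W v₀ = 0)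
    (hW₂ : HasDerivAt (deriv W) a v₀) (ha : 0 < a)
    (hv : ∀ᶠ μ in l, v₂ μ < v₀ ∧ v₀ < v₃ μ ∧ W (v₂ μ) = μ ∧ W (v₃ μ) = μ)
    (hv₂ : Tendsto v₂ l (𝓝 v₀)) (hv₃ : Tendsto v₃ l (𝓝 v₀)) :
    (∀ᶠ μ in l, IntegrableOn (fun v => 1 / √(μ - W v)) (Ioo (v₂ μ) (v₃ μ))) ∧
      Tendsto (fun μ => ∫ v in Ioo (v₂ μ) (v₃ μ), 1 / √(μ - W v)) l (𝓝 (π * √(2 / a))) := by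
  have hbounds := fun {c₁ c₂ : ℝ} (hc₁ : c₁ ∈ Ioo 0 (a / 2)) (hc₂ : a / 2 < c₂) =>
    eventually_integral_one_div_sqrt_mem_Icc hW hW₁ hW₂ hv hv₂ hv₃ hc₁.1 hc₁.2 hc₂
  refine ⟨(hbounds (c₁ := a / 4) (c₂ := a) ⟨by positivity, by linarith⟩ (by linarith)).mono
    fun μ hμ => hμ.1, ?_⟩
  have hlim : π * √(2 / a) = π / √(a / 2) := by rw [← inv_div, sqrt_inv, ← div_eq_mul_inv]
  rw [hlim]
  refine tendsto_of_eventually_mem_Icc (F := fun c => π / √c)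
    (continuousAt_const.div continuous_sqrt.continuousAt (by positivity)) ?_
  filter_upwards [Ioo_mem_nhdsLT (half_pos ha)] with c₁ hc₁
  filter_upwards [self_mem_nhdsWithin] with c₂ hc₂
  exact (hbounds hc₁ hc₂).mono fun μ hμ => hμ.2

end HarmonicPeriod

theorem tendsto_setIntegral_mul_of_tendsto_smallSets {ι : Type*} {l : Filter ι} {s : ι → Set ℝ}
    {ρ : ι → ℝ → ℝ} {φ : ℝ → ℝ} {x₀ m : ℝ} (hφ : ContinuousAt φ x₀)
    (hs : Tendsto s l (𝓝 x₀).smallSets) (hsm : ∀ i, MeasurableSet (s i))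
    (hρ : ∀ᶠ i in l, IntegrableOn (ρ i) (s i) ∧ IntegrableOn (fun v => φ v * ρ i v) (s i) ∧
      ∀ v ∈ s i, 0 ≤ ρ i v)
    (hm : Tendsto (fun i => ∫ v in s i, ρ i v) l (𝓝 m)) :
    Tendsto (fun i => ∫ v in s i, φ v * ρ i v) l (𝓝 (φ x₀ * m)) := by
  have hsmall : (fun i => ∫ v in s i, (φ v - φ x₀) * ρ i v) =o[l] fun i => ∫ v in s i, ρ i v := by
    refine Asymptotics.isLittleO_iff.2 fun ε hε => ?_
    have hnear := hs.eventually (eventually_smallSets_forall.2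
      (hφ.eventually (Metric.closedBall_mem_nhds _ hε)))
    filter_upwards [hρ, hnear] with i hi hφi
    obtain ⟨hρi, -, hρ₀⟩ := hi
    rw [norm_of_nonneg (setIntegral_nonneg (hsm i) hρ₀), ← integral_const_mul]
    refine norm_integral_le_of_norm_le (hρi.const_mul ε)
      (ae_restrict_of_forall_mem (hsm i) fun v hv => ?_)
    rw [norm_mul, norm_of_nonneg (hρ₀ v hv)]
    exact mul_le_mul_of_nonneg_right (hφi v hv) (hρ₀ v hv)
  have hlim := (hm.const_mul (φ x₀)).add
    ((Asymptotics.isLittleO_one_iff ℝ).1 (hsmall.trans_isBigO (hm.isBigO_one ℝ)))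
  rw [add_zero] at hlim
  refine hlim.congr' (hρ.mono fun i ⟨hρi, hφρ, _⟩ => ?_)
  rw [← integral_const_mul, ← integral_add (hρi.const_mul _)
    (by simpa only [sub_mul, Pi.sub_def] using (hφρ.sub (hρi.const_mul (φ x₀))).integrable)]
  congr 1 with v
  ring

theorem harmonic_limit_of_singular_integral_general
    (A B : ℝ) (W : ℝ → ℝ)
    (hW : ContDiffOn ℝ (⊤ : ℕ∞) W (Set.Ioo A B))
    (v₀ : ℝ) (hv₀ : v₀ ∈ Set.Ioo A B)
    (hW1 : deriv W v₀ = 0) (hW2 : 0 < deriv (deriv W) v₀)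
    (hneg : ∀ v ∈ Set.Ioo A v₀, deriv W v < 0)
    (hpos : ∀ v ∈ Set.Ioo v₀ B, 0 < deriv W v)
    (μbar : ℝ) (hμbar : W v₀ < μbar)
    (v₂ v₃ : ℝ → ℝ)
    (hv : ∀ μ ∈ Set.Ioo (W v₀) μbar,
      v₂ μ ∈ Set.Ioo A v₀ ∧ v₃ μ ∈ Set.Ioo v₀ B ∧ W (v₂ μ) = μ ∧ W (v₃ μ) = μ) :
    ∀ φ : ℝ → ℝ, ContinuousOn φ (Set.Ioo A B) →
      Filter.Tendsto
        (fun μ => ∫ v in Set.Ioo (v₂ μ) (v₃ μ), φ v / Real.sqrt (μ - W v))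
        (nhdsWithin (W v₀) (Set.Ioi (W v₀)))
        (nhds (Real.pi * φ v₀ * Real.sqrt (2 / deriv (deriv W) v₀))) := by
  intro φ hφ
  obtain ⟨hWd, hW''⟩ := ContDiffOn.eventually_hasDerivAt_and_hasDerivAt_deriv
    (hW.of_le (WithTop.coe_le_coe.2 le_top)) isOpen_Ioo hv₀
  have hWc : ContinuousOn W (Ioo A B) := hW.continuousOn
  have hv' : ∀ᶠ μ in 𝓝[>] W v₀,
      v₂ μ ∈ Ioo A v₀ ∧ v₃ μ ∈ Ioo v₀ B ∧ W (v₂ μ) = μ ∧ W (v₃ μ) = μ :=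
    eventually_of_mem (Ioo_mem_nhdsGT hμbar) hv
  have hv₂ : Tendsto v₂ (𝓝[>] W v₀) (𝓝 v₀) :=
    tendsto_nhds_of_strictAntiOn (strictAntiOn_of_deriv_neg (convex_Ioc A v₀)
      (hWc.mono fun v hv => ⟨hv.1, hv.2.trans_lt hv₀.2⟩) (by rwa [interior_Ioc]))
      (hv'.mono fun μ h => ⟨h.1, h.2.2.1⟩)
  have hv₃ : Tendsto v₃ (𝓝[>] W v₀) (𝓝 v₀) :=
    tendsto_nhds_of_strictMonoOn (strictMonoOn_of_deriv_pos (convex_Ico v₀ B)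
      (hWc.mono fun v hv => ⟨hv₀.1.trans_le hv.1, hv.2⟩) (by rwa [interior_Ico]))
      (hv'.mono fun μ h => ⟨h.2.1, h.2.2.2⟩)
  obtain ⟨hint, hperiod⟩ := tendsto_integral_one_div_sqrt hWd hW1 hW'' hW2
    (hv'.mono fun μ h => ⟨h.1.2, h.2.1.1, h.2.2⟩) hv₂ hv₃
  have hφρ : ∀ᶠ μ in 𝓝[>] W v₀,
      IntegrableOn (fun v => φ v * (1 / √(μ - W v))) (Ioo (v₂ μ) (v₃ μ)) := by
    filter_upwards [hint, hv'] with μ hμ h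
    rw [← integrableOn_Icc_iff_integrableOn_Ioo] at hμ ⊢
    exact hμ.continuousOn_mul (hφ.mono (Icc_subset_Ioo h.1.1 h.2.1.2)) isCompact_Icc
  have hlim := tendsto_setIntegral_mul_of_tendsto_smallSets
    (hφ.continuousAt (isOpen_Ioo.mem_nhds hv₀)) (hv₂.Ioo hv₃) (fun _ => measurableSet_Ioo)
    ((hint.and hφρ).mono fun μ h => ⟨h.1, h.2, fun v _ => by positivity⟩) hperiod
  rw [show π * φ v₀ * √(2 / deriv (deriv W) v₀) = φ v₀ * (π * √(2 / deriv (deriv W) v₀)) by ring]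
  simpa only [mul_one_div] using hlim

/-- Harmonic (small amplitude) limit of singular integrals along the orbit:
`∫_{v₂(μ)}^{v₃(μ)} φ(v)/√(μ - W(v)) dv → π φ(v₀) √(2/W''(v₀))` as `μ → μ₀⁺`. -/
theorem harmonic_limit_of_singular_integral
    (A B : ℝ) (hAB : A < B) (W : ℝ → ℝ)
    (hW : ContDiffOn ℝ (⊤ : ℕ∞) W (Set.Ioo A B))
    (v₀ : ℝ) (hv₀ : v₀ ∈ Set.Ioo A B)
    (hW1 : deriv W v₀ = 0) (hW2 : 0 < deriv (deriv W) v₀)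
    (hneg : ∀ v ∈ Set.Ioo A v₀, deriv W v < 0)
    (hpos : ∀ v ∈ Set.Ioo v₀ B, 0 < deriv W v)
    (μbar : ℝ) (hμbar : W v₀ < μbar)
    (v₂ v₃ : ℝ → ℝ)
    (hv : ∀ μ ∈ Set.Ioo (W v₀) μbar,
      v₂ μ ∈ Set.Ioo A v₀ ∧ v₃ μ ∈ Set.Ioo v₀ B ∧ W (v₂ μ) = μ ∧ W (v₃ μ) = μ) :
    ∀ φ : ℝ → ℝ, ContinuousOn φ (Set.Ioo A B) →
      Filter.Tendsto
        (fun μ => ∫ v in Set.Ioo (v₂ μ) (v₃ μ), φ v / Real.sqrt (μ - W v))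
        (nhdsWithin (W v₀) (Set.Ioi (W v₀)))
        (nhds (Real.pi * φ v₀ * Real.sqrt (2 / deriv (deriv W) v₀))) :=
  harmonic_limit_of_singular_integral_general A B W hW v₀ hv₀ hW1 hW2 hneg hpos μbar hμbar v₂ v₃ hv
end

section
/- In the harmonic (small amplitude) setting, let κ : (A,B) → ℝ be infinitely differentiable and positive, and define the action Θ(μ) := 2·∫_{v₂(μ)}^{v₃(μ)} √(2κ(v)(μ − W(v))) dv for μ ∈ (μ₀, μ̄), and the harmonic period Ξ₀ := 2π·√(κ(v₀)/W''(v₀)). Then there exist μ₁ ∈ (μ₀, μ̄) and C > 0 such that for all μ ∈ (μ₀, μ₁): |Θ(μ) − Ξ₀·(μ − μ₀)| ≤ C·(μ − μ₀)². -/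
open MeasureTheory Set Filter Topology Real intervalIntegral
open scoped ContDiff

/-!
Hadamard's lemma gives `W v = W v₀ + (v - v₀)² Q v` with `Q` smooth and `Q v₀ = W''(v₀) / 2 > 0`,
so `g v = (v - v₀) √(Q v)` has a smooth local inverse `ψ` with `W (ψ y) = W v₀ + y²`, a
one-dimensional Morse chart. For `μ = W v₀ + s²` the turning points are `ψ (∓s)`, and substituting
`v = ψ y` turns half the action into `∫_{-s}^{s} h y √(s² - y²) dy` with `h = √(2 κ ∘ ψ) ψ'` smooth.
Replacing `h` by its linearization at `0` costs `O(s⁴)`, the linear term integrates to zero by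
oddness, and the constant term gives `h 0 · π s² / 2` with `h 0 = 2 √(κ v₀ / W''(v₀))`.
-/

noncomputable def segmentIntegral (c f : ℝ → ℝ) (x₀ x : ℝ) : ℝ :=
  ∫ t in (0:ℝ)..1, c t * f (x₀ + t * (x - x₀))

section SegmentIntegral

variable {U : Set ℝ} {x₀ : ℝ}

lemma hasDerivAt_segmentIntegral {c f : ℝ → ℝ} (hU : IsOpen U) (hUc : Convex ℝ U)
    (hc : Continuous c) (hf : ContDiffOn ℝ 1 f U) (hx₀ : x₀ ∈ U) {x : ℝ} (hx : x ∈ U) :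
    HasDerivAt (segmentIntegral c f x₀)
      (segmentIntegral (fun t => c t * t) (deriv f) x₀ x) x := by
  obtain ⟨δ, hδ, hball⟩ := Metric.isOpen_iff.1 hU x hx
  have hseg : ∀ t ∈ Icc (0:ℝ) 1, ∀ y ∈ Metric.ball x δ, x₀ + t * (y - x₀) ∈ U :=
    fun t ht y hy => by simpa [smul_eq_mul] using hUc.add_smul_sub_mem hx₀ (hball hy) ht
  set K := (fun p : ℝ × ℝ => x₀ + p.1 * (p.2 - x₀)) '' (Icc 0 1 ×ˢ Metric.closedBall x (δ / 2))
  have hKU : K ⊆ U := by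
    rintro _ ⟨⟨t, y⟩, ⟨ht, hy⟩, rfl⟩
    exact hseg t ht y (Metric.closedBall_subset_ball (by linarith) hy)
  have hK : IsCompact K := (isCompact_Icc.prod (isCompact_closedBall _ _)).image (by fun_prop)
  have hdf : ContinuousOn (deriv f) U := hf.continuousOn_deriv_of_isOpen hU le_rfl
  obtain ⟨Cf, hCf⟩ := hK.exists_bound_of_continuousOn (hdf.mono hKU)
  obtain ⟨Cc, hCc⟩ := isCompact_Icc.exists_bound_of_continuousOn (hc.continuousOn (s := Icc 0 1))
  have hnear : Metric.ball x (δ / 2) ∈ 𝓝 x := Metric.ball_mem_nhds x (by linarith)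
  have hIoc : uIoc (0:ℝ) 1 ⊆ Icc 0 1 := by rw [uIoc_of_le zero_le_one]; exact Ioc_subset_Icc_self
  have hcont : ∀ {g : ℝ → ℝ}, ContinuousOn g U → ∀ (d : ℝ → ℝ), Continuous d →
      ∀ y ∈ Metric.ball x δ, ContinuousOn (fun t => d t * g (x₀ + t * (y - x₀))) (Icc 0 1) :=
    fun hg d hd y hy => hd.continuousOn.mul (hg.comp (by fun_prop) fun t ht => hseg t ht y hy)
  refine (hasDerivAt_integral_of_dominated_loc_of_deriv_le (μ := volume)
    (F := fun y t => c t * f (x₀ + t * (y - x₀)))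
    (F' := fun y t => c t * t * deriv f (x₀ + t * (y - x₀))) (bound := fun _ => Cc * Cf) hnear
    ?_ ?_ ?_ ?_ intervalIntegrable_const ?_).2
  · filter_upwards [Metric.ball_mem_nhds x hδ] with y hy
    exact ((hcont hf.continuousOn c hc y hy).mono hIoc).aestronglyMeasurable measurableSet_uIoc
  · exact (hcont hf.continuousOn c hc x (Metric.mem_ball_self hδ)).intervalIntegrable_of_Icc
      zero_le_one
  · exact ((hcont hdf _ (by fun_prop) x (Metric.mem_ball_self hδ)).mono hIoc).aestronglyMeasurable
      measurableSet_uIoc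
  · refine Eventually.of_forall fun t ht y hy => ?_
    have hy' : x₀ + t * (y - x₀) ∈ K := ⟨(t, y), ⟨hIoc ht, Metric.ball_subset_closedBall hy⟩, rfl⟩
    have ht1 : ‖t‖ ≤ 1 := by
      rw [norm_eq_abs, abs_le]; exact ⟨by linarith [(hIoc ht).1], (hIoc ht).2⟩
    rw [norm_mul, norm_mul]
    calc ‖c t‖ * ‖t‖ * ‖deriv f (x₀ + t * (y - x₀))‖ ≤ Cc * 1 * Cf := by
          have hCc0 : 0 ≤ Cc := (norm_nonneg _).trans (hCc 0 ⟨le_rfl, zero_le_one⟩)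
          gcongr
          · exact hCc t (hIoc ht)
          · exact hCf _ hy'
      _ = Cc * Cf := by ring
  · refine Eventually.of_forall fun t ht y hy => ?_
    have hyU := hseg t (hIoc ht) y (Metric.ball_subset_ball (by linarith) hy)
    have hfd := ((hf.differentiableOn one_ne_zero).differentiableAt (hU.mem_nhds hyU)).hasDerivAt
    have hline : HasDerivAt (fun y => x₀ + t * (y - x₀)) t y := by
      simpa using (((hasDerivAt_id y).sub_const x₀).const_mul t).const_add x₀
    exact ((hfd.comp y hline).const_mul (c t)).congr_deriv (by ring)

lemma contDiffOn_segmentIntegral (hU : IsOpen U) (hUc : Convex ℝ U) (hx₀ : x₀ ∈ U) (n : ℕ) :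
    ∀ {c f : ℝ → ℝ}, Continuous c → ContDiffOn ℝ (n + 1) f U →
      ContDiffOn ℝ n (segmentIntegral c f x₀) U := by
  induction n with
  | zero =>
    intro c f hc hf
    rw [Nat.cast_zero, contDiffOn_zero]
    exact fun x hx => (hasDerivAt_segmentIntegral hU hUc hc (by simpa using hf) hx₀ hx)
      |>.continuousAt.continuousWithinAt
  | succ n ih =>
    intro c f hc hf
    have hD : ∀ x ∈ U, HasDerivAt (segmentIntegral c f x₀)
        (segmentIntegral (fun t => c t * t) (deriv f) x₀ x) x := fun x hx =>
      hasDerivAt_segmentIntegral hU hUc hc (hf.of_le (by norm_cast; omega)) hx₀ hx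
    rw [Nat.cast_add_one, contDiffOn_succ_iff_deriv_of_isOpen hU]
    refine ⟨fun x hx => (hD x hx).differentiableAt.differentiableWithinAt, by simp, ?_⟩
    exact (ih (by fun_prop) (hf.deriv_of_isOpen hU le_rfl)).congr
      fun x hx => (hD x hx).deriv

lemma eq_add_deriv_mul_add_sq_mul_segmentIntegral {f : ℝ → ℝ} (hU : IsOpen U) (hUc : Convex ℝ U)
    (hf : ContDiffOn ℝ 2 f U) (hx₀ : x₀ ∈ U) {x : ℝ} (hx : x ∈ U) :
    f x = f x₀ + deriv f x₀ * (x - x₀) +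
      (x - x₀) ^ 2 * segmentIntegral (fun t => 1 - t) (deriv (deriv f)) x₀ x := by
  have h := map_add_eq_sum_add_integral_iteratedFDeriv (n := 1) (f := f) (x := x₀) (y := x - x₀)
    fun t ht => hf.contDiffAt (hU.mem_nhds (by simpa using hUc.add_smul_sub_mem hx₀ hx ht))
  simp only [iteratedFDeriv_apply_eq_iteratedDeriv_mul_prod, Finset.prod_const, Finset.card_univ,
    Fintype.card_fin, Finset.sum_range_succ, Finset.sum_range_zero, iteratedDeriv_succ,
    iteratedDeriv_zero, smul_eq_mul, Nat.factorial_zero, Nat.factorial_one, Nat.cast_one, inv_one,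
    one_mul, pow_zero, pow_one, zero_add, add_sub_cancel] at h
  rw [h, segmentIntegral, ← intervalIntegral.integral_const_mul]
  congr 1
  · ring
  · exact integral_congr fun t _ => by ring

lemma segmentIntegral_self (c f : ℝ → ℝ) (x₀ : ℝ) :
    segmentIntegral c f x₀ x₀ = (∫ t in (0:ℝ)..1, c t) * f x₀ := by
  simp [segmentIntegral, intervalIntegral.integral_mul_const]

end SegmentIntegral

lemma isBigO_sub_sub_deriv_mul_sq {f : ℝ → ℝ} {x₀ : ℝ} (hf : ContDiffAt ℝ 3 f x₀) :
    (fun x => f x - f x₀ - deriv f x₀ * (x - x₀)) =O[𝓝 x₀] fun x => (x - x₀) ^ 2 := by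
  obtain ⟨u, hu, hfu⟩ := hf.contDiffOn le_rfl (by simp)
  obtain ⟨ε, hε, hball⟩ := Metric.mem_nhds_iff.1 hu
  have hfB : ContDiffOn ℝ 3 f (Metric.ball x₀ ε) := hfu.mono hball
  have hx₀ : x₀ ∈ Metric.ball x₀ ε := Metric.mem_ball_self hε
  set S := segmentIntegral (fun t => 1 - t) (deriv (deriv f)) x₀
  have hS : ContinuousAt S x₀ := by
    have h2 : ContDiffOn ℝ (0 + 1) (deriv (deriv f)) (Metric.ball x₀ ε) :=
      (hfB.deriv_of_isOpen (m := 2) Metric.isOpen_ball (by norm_num)).deriv_of_isOpen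
        Metric.isOpen_ball (by norm_num)
    exact (contDiffOn_segmentIntegral Metric.isOpen_ball (convex_ball x₀ ε) hx₀ 0 (by fun_prop)
      h2).continuousOn.continuousAt (Metric.ball_mem_nhds x₀ hε)
  have heq : (fun x => f x - f x₀ - deriv f x₀ * (x - x₀)) =ᶠ[𝓝 x₀]
      fun x => (x - x₀) ^ 2 * S x := by
    filter_upwards [Metric.ball_mem_nhds x₀ hε] with x hx
    rw [eq_add_deriv_mul_add_sq_mul_segmentIntegral Metric.isOpen_ball (convex_ball x₀ ε)
      (hfB.of_le (by norm_num)) hx₀ hx]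
    ring
  refine heq.trans_isBigO ?_
  simpa using (Asymptotics.isBigO_refl (fun x => (x - x₀) ^ 2) (𝓝 x₀)).mul
    (hS.tendsto.isBigO_one ℝ)

lemma exists_contDiffOn_eq_add_sq_mul {U : Set ℝ} {W : ℝ → ℝ} {v₀ : ℝ} (hU : IsOpen U)
    (hUc : Convex ℝ U) (hW : ContDiffOn ℝ ∞ W U) (hv₀ : v₀ ∈ U) (hW1 : deriv W v₀ = 0) :
    ∃ Q : ℝ → ℝ, ContDiffOn ℝ ∞ Q U ∧ Q v₀ = deriv (deriv W) v₀ / 2 ∧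
      ∀ v ∈ U, W v = W v₀ + (v - v₀) ^ 2 * Q v := by
  refine ⟨segmentIntegral (fun t => 1 - t) (deriv (deriv W)) v₀, ?_, ?_, fun v hv => ?_⟩
  · have hW'' : ContDiffOn ℝ ∞ (deriv (deriv W)) U :=
      (hW.deriv_of_isOpen (m := ∞) hU le_rfl).deriv_of_isOpen hU le_rfl
    exact contDiffOn_infty.2 fun n => contDiffOn_segmentIntegral hU hUc hv₀ n (by fun_prop)
      (hW''.of_le (by exact_mod_cast le_top))
  · rw [segmentIntegral_self, intervalIntegral.integral_sub intervalIntegrable_const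
      intervalIntegral.intervalIntegrable_id, integral_id, intervalIntegral.integral_const]
    norm_num
    ring
  · simpa [hW1] using eq_add_deriv_mul_add_sq_mul_segmentIntegral hU hUc
      (hW.of_le (WithTop.coe_le_coe.2 le_top)) hv₀ hv

lemma exists_morse_chart {U : Set ℝ} {W : ℝ → ℝ} {v₀ : ℝ} (hU : IsOpen U)
    (hW : ContDiffOn ℝ ∞ W U) (hv₀ : v₀ ∈ U) (hW1 : deriv W v₀ = 0)
    (hW2 : 0 < deriv (deriv W) v₀) :
    ∃ ψ : ℝ → ℝ, ContDiffAt ℝ ∞ ψ 0 ∧ ψ 0 = v₀ ∧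
      deriv ψ 0 = (√(deriv (deriv W) v₀ / 2))⁻¹ ∧ ∀ᶠ y in 𝓝 0, W (ψ y) = W v₀ + y ^ 2 := by
  obtain ⟨ε, hε, hball⟩ := Metric.isOpen_iff.1 hU v₀ hv₀
  have hv₀B : v₀ ∈ Metric.ball v₀ ε := Metric.mem_ball_self hε
  have hB := Metric.isOpen_ball.mem_nhds hv₀B
  obtain ⟨Q, hQ, hQ0, hWQ⟩ := exists_contDiffOn_eq_add_sq_mul Metric.isOpen_ball
    (convex_ball v₀ ε) (hW.mono hball) hv₀B hW1
  have hQpos : 0 < Q v₀ := by rw [hQ0]; positivity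
  have hQat : ContDiffAt ℝ ∞ Q v₀ := hQ.contDiffAt hB
  have hsqrtQ : ContDiffAt ℝ ∞ (fun v => √(Q v)) v₀ := (contDiffAt_sqrt hQpos.ne').comp v₀ hQat
  set g : ℝ → ℝ := fun v => (v - v₀) * √(Q v)
  have hg : ContDiffAt ℝ ∞ g v₀ := (contDiffAt_id.sub contDiffAt_const).mul hsqrtQ
  have hm : 0 < √(Q v₀) := sqrt_pos.2 hQpos
  have hgd : HasDerivAt g √(Q v₀) v₀ := by
    simpa using ((hasDerivAt_id v₀).sub_const v₀).fun_mul
      (hsqrtQ.differentiableAt (by simp)).hasDerivAt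
  have hFD := hgd.hasFDerivAt_equiv hm.ne'
  have hg0 : g v₀ = 0 := by simp [g]
  set ψ := hg.localInverse hFD (by simp)
  have hψ : ContDiffAt ℝ ∞ ψ 0 := hg0 ▸ hg.to_localInverse hFD (by simp)
  have hψ0 : ψ 0 = v₀ := hg0 ▸ hg.localInverse_apply_image hFD (by simp)
  have hright : ∀ᶠ y in 𝓝 0, g (ψ y) = y :=
    hg0 ▸ (hg.hasStrictFDerivAt' hFD (by simp)).eventually_right_inverse
  have hψv₀ : Tendsto ψ (𝓝 0) (𝓝 v₀) := hψ0 ▸ hψ.continuousAt.tendsto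
  refine ⟨ψ, hψ, hψ0, ?_, ?_⟩
  · rw [← hQ0]
    have hgd' : HasDerivAt g √(Q v₀) (ψ 0) := by rw [hψ0]; exact hgd
    exact (hgd'.of_local_left_inverse hψ.continuousAt hm.ne' hright).deriv
  · filter_upwards [hright, hψv₀.eventually hB,
      hψv₀.eventually (hQat.continuousAt.eventually (lt_mem_nhds hQpos))] with y hy hyB hyQ
    rw [hWQ _ hyB]
    conv_rhs => rw [← hy]
    simp only [g, mul_pow, sq_sqrt hyQ.le]

lemma integral_sqrt_sq_sub_sq {s : ℝ} (hs : 0 < s) :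
    ∫ y in -s..s, √(s ^ 2 - y ^ 2) = π / 2 * s ^ 2 := by
  have hscale : ∀ x : ℝ, √(s ^ 2 - (s * x) ^ 2) = s * √(1 - x ^ 2) := fun x => by
    rw [show s ^ 2 - (s * x) ^ 2 = s ^ 2 * (1 - x ^ 2) by ring, sqrt_mul (sq_nonneg s),
      sqrt_sq hs.le]
  have h := intervalIntegral.integral_comp_mul_left (a := -1) (b := 1)
    (fun y => √(s ^ 2 - y ^ 2)) hs.ne'
  simp only [hscale, intervalIntegral.integral_const_mul, integral_sqrt_one_sub_sq, mul_neg,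
    mul_one, smul_eq_mul] at h
  rw [eq_inv_mul_iff_mul_eq₀ hs.ne'] at h
  linear_combination -h

lemma integral_mul_sqrt_sq_sub_sq (s : ℝ) : ∫ y in -s..s, y * √(s ^ 2 - y ^ 2) = 0 := by
  have h := intervalIntegral.integral_comp_neg (a := -s) (b := s) fun y => y * √(s ^ 2 - y ^ 2)
  simp only [neg_sq, neg_mul, intervalIntegral.integral_neg, neg_neg] at h
  linarith

lemma abs_integral_mul_sqrt_sq_sub_sq_sub_le {h : ℝ → ℝ} {s M c₀ c₁ : ℝ} (hs : 0 < s)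
    (hM : 0 ≤ M) (hh : ContinuousOn h (Icc (-s) s))
    (hbound : ∀ y ∈ Icc (-s) s, |h y - c₀ - c₁ * y| ≤ M * y ^ 2) :
    |(∫ y in -s..s, h y * √(s ^ 2 - y ^ 2)) - π / 2 * c₀ * s ^ 2| ≤ 2 * M * s ^ 4 := by
  have hIcc : uIcc (-s) s = Icc (-s) s := uIcc_of_le (by linarith)
  have hsqrt : Continuous fun y : ℝ => √(s ^ 2 - y ^ 2) := by fun_prop
  have hint : ∀ {f : ℝ → ℝ}, ContinuousOn f (Icc (-s) s) →
      IntervalIntegrable (fun y => f y * √(s ^ 2 - y ^ 2)) volume (-s) s :=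
    fun hf => (hf.mul hsqrt.continuousOn).intervalIntegrable_of_Icc (by linarith)
  have hsplit : ∫ y in -s..s, (h y - c₀ - c₁ * y) * √(s ^ 2 - y ^ 2) =
      (∫ y in -s..s, h y * √(s ^ 2 - y ^ 2)) - π / 2 * c₀ * s ^ 2 := by
    simp only [sub_mul, mul_assoc]
    rw [intervalIntegral.integral_sub ((hint hh).sub (hint continuousOn_const))
        ((hint (f := fun y => y) continuousOn_id).const_mul c₁),
      intervalIntegral.integral_sub (hint hh) (hint continuousOn_const),
      intervalIntegral.integral_const_mul, intervalIntegral.integral_const_mul,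
      integral_sqrt_sq_sub_sq hs, integral_mul_sqrt_sq_sub_sq]
    ring
  rw [← hsplit]
  have hpt : ∀ y ∈ uIoc (-s) s, ‖(h y - c₀ - c₁ * y) * √(s ^ 2 - y ^ 2)‖ ≤ M * s ^ 2 * s := by
    intro y hy
    have hy : y ∈ Icc (-s) s := hIcc ▸ uIoc_subset_uIcc hy
    have hy2 : y ^ 2 ≤ s ^ 2 := sq_le_sq' hy.1 hy.2
    rw [norm_mul, norm_of_nonneg (sqrt_nonneg _), norm_eq_abs]
    gcongr
    · exact (hbound y hy).trans (by gcongr)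
    · calc √(s ^ 2 - y ^ 2) ≤ √(s ^ 2) := sqrt_le_sqrt (by linarith [sq_nonneg y])
        _ = s := sqrt_sq hs.le
  calc _ ≤ M * s ^ 2 * s * |s - -s| := intervalIntegral.norm_integral_le_of_norm_le_const hpt
    _ = 2 * M * s ^ 4 := by rw [abs_of_pos (by linarith)]; ring

noncomputable def chartDensity (κ ψ : ℝ → ℝ) (y : ℝ) : ℝ :=
  √(2 * κ (ψ y)) * deriv ψ y

lemma integral_Ioo_sqrt_eq_integral_chartDensity {W κ ψ : ℝ → ℝ} {c s : ℝ} (hs : 0 ≤ s)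
    (hψ : ∀ y ∈ Icc (-s) s, HasDerivAt ψ (deriv ψ y) y) (hψ' : ∀ y ∈ Icc (-s) s, 0 ≤ deriv ψ y)
    (hWψ : ∀ y ∈ Icc (-s) s, W (ψ y) = c + y ^ 2) (hκ : ∀ y ∈ Icc (-s) s, 0 ≤ κ (ψ y)) :
    ∫ v in Ioo (ψ (-s)) (ψ s), √(2 * κ v * (c + s ^ 2 - W v)) =
      ∫ y in -s..s, chartDensity κ ψ y * √(s ^ 2 - y ^ 2) := by
  have hs' : -s ≤ s := by linarith
  have hcont : ContinuousOn ψ (Icc (-s) s) := fun y hy => (hψ y hy).continuousAt.continuousWithinAt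
  have hmono : ψ (-s) ≤ ψ s :=
    monotoneOn_of_deriv_nonneg (convex_Icc _ _) hcont
      (fun y hy => (hψ y (interior_subset hy)).differentiableAt.differentiableWithinAt)
      (fun y hy => hψ' y (interior_subset hy)) ⟨le_rfl, hs'⟩ ⟨hs', le_rfl⟩ hs'
  rw [← integral_Ioc_eq_integral_Ioo, ← intervalIntegral.integral_of_le hmono,
    ← intervalIntegral.integral_comp_mul_deriv_of_deriv_nonneg (by rwa [uIcc_of_le hs'])
      (fun y hy => hψ y (Ioo_subset_Icc_self (by simpa [hs'] using hy)))
      (fun y hy => hψ' y (Ioo_subset_Icc_self (by simpa [hs'] using hy)))]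
  refine intervalIntegral.integral_congr fun y hy => ?_
  rw [uIcc_of_le hs'] at hy
  simp only [Function.comp, chartDensity, hWψ y hy,
    show c + s ^ 2 - (c + y ^ 2) = s ^ 2 - y ^ 2 by ring,
    sqrt_mul (mul_nonneg zero_le_two (hκ y hy))]
  ring

lemma abs_integral_Ioo_sqrt_sub_le {W κ ψ : ℝ → ℝ} {c s M : ℝ} (hs : 0 < s) (hM : 0 ≤ M)
    (hψ : ∀ y ∈ Icc (-s) s, HasDerivAt ψ (deriv ψ y) y ∧ 0 < deriv ψ y)
    (hWψ : ∀ y ∈ Icc (-s) s, W (ψ y) = c + y ^ 2) (hκ : ∀ y ∈ Icc (-s) s, 0 ≤ κ (ψ y))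
    (hh : ContinuousOn (chartDensity κ ψ) (Icc (-s) s))
    (hbound : ∀ y ∈ Icc (-s) s,
      |chartDensity κ ψ y - chartDensity κ ψ 0 - deriv (chartDensity κ ψ) 0 * y| ≤ M * y ^ 2) :
    |(∫ v in Ioo (ψ (-s)) (ψ s), √(2 * κ v * (c + s ^ 2 - W v))) -
      π / 2 * chartDensity κ ψ 0 * s ^ 2| ≤ 2 * M * s ^ 4 := by
  rw [integral_Ioo_sqrt_eq_integral_chartDensity hs.le (fun y hy => (hψ y hy).1)
    (fun y hy => (hψ y hy).2.le) hWψ hκ]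
  exact abs_integral_mul_sqrt_sq_sub_sq_sub_le hs hM hh hbound

lemma exists_Icc_chartDensity_bound {U : Set ℝ} {W κ ψ : ℝ → ℝ} {c : ℝ} (hU : IsOpen U)
    (hκ : ContDiffOn ℝ 3 κ U) (hκpos : ∀ v ∈ U, 0 < κ v) (hψ : ContDiffAt ℝ 4 ψ 0)
    (hψ0 : ψ 0 ∈ U) (hψ'0 : 0 < deriv ψ 0) (hWψ : ∀ᶠ y in 𝓝 0, W (ψ y) = c + y ^ 2) :
    ∃ M > 0, ∃ r > 0, MapsTo ψ (Icc (-r) r) U ∧ StrictMonoOn ψ (Icc (-r) r) ∧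
      (∀ y ∈ Icc (-r) r, HasDerivAt ψ (deriv ψ y) y ∧ 0 < deriv ψ y) ∧
      (∀ y ∈ Icc (-r) r, W (ψ y) = c + y ^ 2) ∧ ContinuousOn (chartDensity κ ψ) (Icc (-r) r) ∧
      ∀ y ∈ Icc (-r) r,
        |chartDensity κ ψ y - chartDensity κ ψ 0 - deriv (chartDensity κ ψ) 0 * y| ≤ M * y ^ 2 := by
  have hh : ContDiffAt ℝ 3 (chartDensity κ ψ) 0 :=
    ((contDiffAt_sqrt (mul_pos two_pos (hκpos _ hψ0)).ne').comp 0 (contDiffAt_const.mul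
      ((hκ.contDiffAt (hU.mem_nhds hψ0)).comp 0 (hψ.of_le (by norm_num))))).mul
      (hψ.derivWithin (by norm_num))
  obtain ⟨M, hM, hMbound⟩ := (isBigO_sub_sub_deriv_mul_sq hh).exists_pos
  have hloc : ∀ᶠ y in 𝓝 (0:ℝ), ψ y ∈ U ∧ (HasDerivAt ψ (deriv ψ y) y ∧ 0 < deriv ψ y) ∧
      W (ψ y) = c + y ^ 2 ∧ ContinuousAt (chartDensity κ ψ) y ∧
      |chartDensity κ ψ y - chartDensity κ ψ 0 - deriv (chartDensity κ ψ) 0 * y| ≤ M * y ^ 2 := by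
    filter_upwards [hψ.continuousAt.preimage_mem_nhds (hU.mem_nhds hψ0), hψ.eventually (by simp),
      (hψ.derivWithin (m := 3) (by norm_num)).continuousAt.eventually (lt_mem_nhds hψ'0), hWψ,
      hh.eventually (by simp), hMbound.bound] with y hyU hψy hψ'y hyW hhy hMy
    exact ⟨hyU, ⟨(hψy.differentiableAt (by norm_num)).hasDerivAt, hψ'y⟩, hyW, hhy.continuousAt,
      by simpa using hMy⟩
  obtain ⟨r, hr, hball⟩ := Metric.nhds_basis_closedBall.eventually_iff.1 hloc
  have hr' : ∀ y ∈ Icc (-r) r, y ∈ Metric.closedBall 0 r := fun y hy => by simpa [abs_le] using hy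
  have hψd : ∀ y ∈ Icc (-r) r, HasDerivAt ψ (deriv ψ y) y ∧ 0 < deriv ψ y :=
    fun y hy => (hball (hr' y hy)).2.1
  refine ⟨M, hM, r, hr, fun y hy => (hball (hr' y hy)).1, ?_, hψd,
    fun y hy => (hball (hr' y hy)).2.2.1,
    fun y hy => (hball (hr' y hy)).2.2.2.1.continuousWithinAt,
    fun y hy => (hball (hr' y hy)).2.2.2.2⟩
  exact strictMonoOn_of_deriv_pos (convex_Icc _ _)
    (fun y hy => (hψd y hy).1.continuousAt.continuousWithinAt)
    (fun y hy => (hψd y (interior_subset hy)).2)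

lemma sqrt_two_mul_mul_inv_sqrt_div_two (k : ℝ) {a : ℝ} (ha : 0 < a) :
    √(2 * k) * (√(a / 2))⁻¹ = 2 * √(k / a) := by
  rw [← div_eq_mul_inv, ← sqrt_div' _ (by positivity),
    show 2 * k / (a / 2) = 2 ^ 2 * (k / a) by field_simp, sqrt_mul (by positivity),
    sqrt_sq zero_le_two]

theorem harmonic_limit_of_action_general
    (A B : ℝ) (W : ℝ → ℝ)
    (hW : ContDiffOn ℝ (⊤ : ℕ∞) W (Set.Ioo A B))
    (v₀ : ℝ) (hv₀ : v₀ ∈ Set.Ioo A B)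
    (hW1 : deriv W v₀ = 0) (hW2 : 0 < deriv (deriv W) v₀)
    (hneg : ∀ v ∈ Set.Ioo A v₀, deriv W v < 0)
    (hpos : ∀ v ∈ Set.Ioo v₀ B, 0 < deriv W v)
    (μbar : ℝ) (hμbar : W v₀ < μbar)
    (v₂ v₃ : ℝ → ℝ)
    (hv : ∀ μ ∈ Set.Ioo (W v₀) μbar,
      v₂ μ ∈ Set.Ioo A v₀ ∧ v₃ μ ∈ Set.Ioo v₀ B ∧ W (v₂ μ) = μ ∧ W (v₃ μ) = μ)
    (κ : ℝ → ℝ) (hκ : ContDiffOn ℝ (⊤ : ℕ∞) κ (Set.Ioo A B))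
    (hκpos : ∀ v ∈ Set.Ioo A B, 0 < κ v) :
    ∃ μ₁ ∈ Set.Ioo (W v₀) μbar, ∃ C > (0:ℝ), ∀ μ ∈ Set.Ioo (W v₀) μ₁,
      |(2 * ∫ v in Set.Ioo (v₂ μ) (v₃ μ), Real.sqrt (2 * κ v * (μ - W v)))
        - (2 * Real.pi * Real.sqrt (κ v₀ / deriv (deriv W) v₀)) * (μ - W v₀)|
      ≤ C * (μ - W v₀) ^ 2 := by
  obtain ⟨ψ, hψ, hψ0, hψ'0, hWψ⟩ := exists_morse_chart isOpen_Ioo hW hv₀ hW1 hW2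
  obtain ⟨M, hM, r, hr, hψU, hψmono, hψd, hWψr, hhc, hhM⟩ := exists_Icc_chartDensity_bound isOpen_Ioo
    (hκ.of_le (WithTop.coe_le_coe.2 le_top)) hκpos (hψ.of_le (WithTop.coe_le_coe.2 le_top))
    (hψ0 ▸ hv₀) (by rw [hψ'0]; positivity) hWψ
  have hanti : StrictAntiOn W (Ioc A v₀) :=
    strictAntiOn_of_deriv_neg (convex_Ioc A v₀)
      (hW.continuousOn.mono fun v hv => ⟨hv.1, hv.2.trans_lt hv₀.2⟩) (by simpa using hneg)
  have hmono : StrictMonoOn W (Ico v₀ B) :=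
    strictMonoOn_of_deriv_pos (convex_Ico v₀ B)
      (hW.continuousOn.mono fun v hv => ⟨hv₀.1.trans_le hv.1, hv.2⟩) (by simpa using hpos)
  refine ⟨min ((W v₀ + μbar) / 2) (W v₀ + r ^ 2), ⟨lt_min (by linarith)
    (lt_add_of_pos_right _ (pow_pos hr 2)), (min_le_left _ _).trans_lt (by linarith)⟩,
    4 * M, by positivity, fun μ hμ => ?_⟩
  obtain ⟨s, hs, hsr, rfl⟩ : ∃ s, 0 < s ∧ s ≤ r ∧ W v₀ + s ^ 2 = μ := by
    refine ⟨√(μ - W v₀), sqrt_pos.2 (by linarith [hμ.1]), ?_, by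
      rw [sq_sqrt (by linarith [hμ.1])]; ring⟩
    rw [sqrt_le_left hr.le]
    linarith [hμ.2.trans_le (min_le_right _ _)]
  have hsub : Icc (-s) s ⊆ Icc (-r) r := Icc_subset_Icc (neg_le_neg hsr) hsr
  have hms : -s ∈ Icc (-r) r := hsub ⟨le_rfl, by linarith⟩
  have hps : s ∈ Icc (-r) r := hsub ⟨by linarith, le_rfl⟩
  have h0 : (0:ℝ) ∈ Icc (-r) r := ⟨by linarith, hr.le⟩
  obtain ⟨h2, h3, hW2', hW3'⟩ := hv _ ⟨lt_add_of_pos_right _ (pow_pos hs 2),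
    hμ.2.trans_le (min_le_left _ _) |>.trans (by linarith)⟩
  have hv2 : v₂ (W v₀ + s ^ 2) = ψ (-s) :=
    hanti.injOn ⟨h2.1, h2.2.le⟩ ⟨(hψU hms).1, (hψ0 ▸ hψmono hms h0 (by linarith)).le⟩
      (by rw [hW2', hWψr _ hms, neg_sq])
  have hv3 : v₃ (W v₀ + s ^ 2) = ψ s :=
    hmono.injOn ⟨h3.1.le, h3.2⟩ ⟨(hψ0 ▸ hψmono h0 hps hs).le, (hψU hps).2⟩
      (by rw [hW3', hWψr _ hps])
  have hest := abs_integral_Ioo_sqrt_sub_le hs hM.le (fun y hy => hψd y (hsub hy))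
    (fun y hy => hWψr y (hsub hy)) (fun y hy => (hκpos _ (hψU (hsub hy))).le) (hhc.mono hsub)
    (fun y hy => hhM y (hsub hy))
  rw [chartDensity, hψ0, hψ'0, sqrt_two_mul_mul_inv_sqrt_div_two _ hW2] at hest
  rw [hv2, hv3, add_sub_cancel_left]
  calc _ = 2 * |(∫ v in Ioo (ψ (-s)) (ψ s), √(2 * κ v * (W v₀ + s ^ 2 - W v))) -
        π / 2 * (2 * √(κ v₀ / deriv (deriv W) v₀)) * s ^ 2| := by
        rw [← abs_two, ← abs_mul, abs_two]; congr 1; ring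
    _ ≤ 4 * M * (s ^ 2) ^ 2 := by linarith

/-- Small amplitude expansion of the action:
`Θ(μ) = Ξ₀ (μ - μ₀) + O((μ - μ₀)²)` where `Ξ₀ = 2π √(κ(v₀)/W''(v₀))` is the
harmonic period. -/
theorem harmonic_limit_of_action
    (A B : ℝ) (hAB : A < B) (W : ℝ → ℝ)
    (hW : ContDiffOn ℝ (⊤ : ℕ∞) W (Set.Ioo A B))
    (v₀ : ℝ) (hv₀ : v₀ ∈ Set.Ioo A B)
    (hW1 : deriv W v₀ = 0) (hW2 : 0 < deriv (deriv W) v₀)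
    (hneg : ∀ v ∈ Set.Ioo A v₀, deriv W v < 0)
    (hpos : ∀ v ∈ Set.Ioo v₀ B, 0 < deriv W v)
    (μbar : ℝ) (hμbar : W v₀ < μbar)
    (v₂ v₃ : ℝ → ℝ)
    (hv : ∀ μ ∈ Set.Ioo (W v₀) μbar,
      v₂ μ ∈ Set.Ioo A v₀ ∧ v₃ μ ∈ Set.Ioo v₀ B ∧ W (v₂ μ) = μ ∧ W (v₃ μ) = μ)
    (κ : ℝ → ℝ) (hκ : ContDiffOn ℝ (⊤ : ℕ∞) κ (Set.Ioo A B))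
    (hκpos : ∀ v ∈ Set.Ioo A B, 0 < κ v) :
    ∃ μ₁ ∈ Set.Ioo (W v₀) μbar, ∃ C > (0:ℝ), ∀ μ ∈ Set.Ioo (W v₀) μ₁,
      |(2 * ∫ v in Set.Ioo (v₂ μ) (v₃ μ), Real.sqrt (2 * κ v * (μ - W v)))
        - (2 * Real.pi * Real.sqrt (κ v₀ / deriv (deriv W) v₀)) * (μ - W v₀)|
      ≤ C * (μ - W v₀) ^ 2 :=
  harmonic_limit_of_action_general A B W hW v₀ hv₀ hW1 hW2 hneg hpos μbar hμbar v₂ v₃ hv κ hκ hκpos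
end

section
/- In the soliton-limit setting, the period Ξ(μ) := ∫_{v₂(μ)}^{v₃(μ)} √(2κ(v)/(μ − W(v))) dv satisfies the asymptotics: there exist μ̄ ∈ (μ₀, μ_s) and C > 0 such that for all μ ∈ (μ̄, μ_s), |Ξ(μ) + √(−κ(v_s)/W''(v_s)) · ln(μ_s − μ)| ≤ C. -/
/-!
Near the nondegenerate maximum `vs` one has `W vs - W v ≈ a (v - vs)²` with `a = -W''(vs) / 2`.
On `[v₂, m]`, for `m` close to `vs`, the integrand `√(2κ / (μ - W))` is compared with
`c (-W') / (√(W vs - W) √(μ - W))`, `c = √(κ vs / (2a))`, which is the exact derivative of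
`2c log (√(W vs - W) + √(μ - W))`: this primitive equals `c log (W vs - μ)` at `v₂` and stays
bounded at `m`. A third-order Taylor expansion makes the difference `O(v - vs) / √(μ - W)`, hence
at most a constant times `-W' / √(μ - W)`, whose integral is bounded. On the rest of the well the
integrand is either bounded (where `μ - W` stays away from `0`) or, near `v₃` where `W' ≥ d > 0`,
dominated by `W' / (d √(μ - W))`, again the derivative of a bounded function.
-/

open MeasureTheory Set Real Filter Topology

theorem intervalIntegrable_of_abs_le_hasDerivAt {f g G : ℝ → ℝ} {a b : ℝ} (hab : a ≤ b)
    (hf : AEStronglyMeasurable f (volume.restrict (Ioo a b)))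
    (hG : ContinuousOn G (Icc a b))
    (hGd : ∀ x ∈ Ioo a b, HasDerivAt G (g x) x) (hfg : ∀ x ∈ Ioo a b, |f x| ≤ g x) :
    IntervalIntegrable f volume a b ∧ IntervalIntegrable g volume a b := by
  have hg : IntervalIntegrable g volume a b :=
    (intervalIntegrable_iff_integrableOn_Ioc_of_le hab).2 <|
      intervalIntegral.integrableOn_deriv_of_nonneg hG hGd fun x hx =>
        (abs_nonneg _).trans (hfg x hx)
  refine ⟨?_, hg⟩
  rw [intervalIntegrable_iff_integrableOn_Ioo_of_le hab] at hg ⊢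
  exact hg.mono' hf ((ae_restrict_iff' measurableSet_Ioo).2 (Eventually.of_forall hfg))

theorem abs_intervalIntegral_le_of_abs_le_hasDerivAt {f g G : ℝ → ℝ} {a b : ℝ} (hab : a ≤ b)
    (hf : AEStronglyMeasurable f (volume.restrict (Ioo a b)))
    (hG : ContinuousOn G (Icc a b))
    (hGd : ∀ x ∈ Ioo a b, HasDerivAt G (g x) x) (hfg : ∀ x ∈ Ioo a b, |f x| ≤ g x) :
    |∫ x in a..b, f x| ≤ G b - G a := by
  obtain ⟨hfi, hgi⟩ := intervalIntegrable_of_abs_le_hasDerivAt hab hf hG hGd hfg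
  calc |∫ x in a..b, f x| ≤ ∫ x in a..b, |f x| :=
        intervalIntegral.abs_integral_le_integral_abs hab
    _ ≤ ∫ x in a..b, g x := intervalIntegral.integral_mono_on_of_le_Ioo hab hfi.abs hgi hfg
    _ = G b - G a := intervalIntegral.integral_eq_sub_of_hasDerivAt_of_le hab hG hGd hgi

theorem le_of_hasDerivAt_le {φ ψ φ' ψ' : ℝ → ℝ} {a b : ℝ}
    (hφ : ∀ x ∈ Icc a b, HasDerivAt φ (φ' x) x) (hψ : ∀ x ∈ Icc a b, HasDerivAt ψ (ψ' x) x)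
    (ha : φ a ≤ ψ a) (h : ∀ x ∈ Icc a b, φ' x ≤ ψ' x) : ∀ x ∈ Icc a b, φ x ≤ ψ x :=
  image_le_of_deriv_right_le_deriv_boundary
    (fun x hx => (hφ x hx).continuousAt.continuousWithinAt)
    (fun x hx => (hφ x (Ico_subset_Icc_self hx)).hasDerivWithinAt) ha
    (fun x hx => (hψ x hx).continuousAt.continuousWithinAt)
    (fun x hx => (hψ x (Ico_subset_Icc_self hx)).hasDerivWithinAt)
    (fun x hx => h x (Ico_subset_Icc_self hx))

theorem abs_le_mul_pow_of_abs_deriv_le {φ φ' : ℝ → ℝ} {a b M : ℝ} (n : ℕ)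
    (hφ : ∀ x ∈ Icc a b, HasDerivAt φ (φ' x) x) (ha : φ a = 0)
    (hφ' : ∀ x ∈ Icc a b, |φ' x| ≤ M * (x - a) ^ n) :
    ∀ x ∈ Icc a b, |φ x| ≤ M / (n + 1) * (x - a) ^ (n + 1) := by
  have hB (x : ℝ) :
      HasDerivAt (fun y => M / (n + 1) * (y - a) ^ (n + 1)) (M * (x - a) ^ n) x := by
    refine ((((hasDerivAt_id' x).sub_const a).pow (n + 1)).const_mul
      (M / (n + 1))).congr_deriv ?_
    rw [Nat.add_sub_cancel]
    push_cast
    field_simp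
  exact image_norm_le_of_norm_deriv_right_le_deriv_boundary
    (fun x hx => (hφ x hx).continuousAt.continuousWithinAt)
    (fun x hx => (hφ x (Ico_subset_Icc_self hx)).hasDerivWithinAt) (by simp [ha]) hB
    (fun x hx => hφ' x (Ico_subset_Icc_self hx))

theorem taylor_bounds_of_deriv_eq_zero {f f' f'' f''' : ℝ → ℝ} {a b M : ℝ}
    (hf : ∀ x ∈ Icc a b, HasDerivAt f (f' x) x) (hf' : ∀ x ∈ Icc a b, HasDerivAt f' (f'' x) x)
    (hf'' : ∀ x ∈ Icc a b, HasDerivAt f'' (f''' x) x) (hM : ∀ x ∈ Icc a b, |f''' x| ≤ M)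
    (hf'a : f' a = 0) (x : ℝ) (hx : x ∈ Icc a b) :
    |f' x - f'' a * (x - a)| ≤ M / 2 * (x - a) ^ 2 ∧
      |f x - f a - f'' a / 2 * (x - a) ^ 2| ≤ M / 6 * (x - a) ^ 3 := by
  have h₀ := abs_le_mul_pow_of_abs_deriv_le 0 (φ := fun y => f'' y - f'' a)
    (fun y hy => (hf'' y hy).sub_const _) (sub_self _) (by simpa using hM)
  have h₁ := abs_le_mul_pow_of_abs_deriv_le 1 (M := M) (φ := fun y => f' y - f'' a * (y - a))
    (φ' := fun y => f'' y - f'' a)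
    (fun y hy => ((hf' y hy).sub
      (((hasDerivAt_id' y).sub_const a).const_mul (f'' a))).congr_deriv (by ring))
    (by simp [hf'a]) (fun y hy => (h₀ y hy).trans_eq (by norm_num))
  have h₂ := abs_le_mul_pow_of_abs_deriv_le 2 (M := M / 2)
    (φ := fun y => f y - f a - f'' a / 2 * (y - a) ^ 2) (φ' := fun y => f' y - f'' a * (y - a))
    (fun y hy => (((hf y hy).sub_const _).sub
      ((((hasDerivAt_id' y).sub_const a).pow 2).const_mul (f'' a / 2))).congr_deriv (by ring))
    (by simp) (fun y hy => (h₁ y hy).trans_eq (by norm_num))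
  exact ⟨(h₁ x hx).trans_eq (by norm_num), (h₂ x hx).trans_eq (by push_cast; ring)⟩

theorem ContDiffOn.hasDerivAt_deriv {f : ℝ → ℝ} {U : Set ℝ} {n : WithTop ℕ∞}
    (hf : ContDiffOn ℝ n f U) (hU : IsOpen U) (hn : n ≠ 0) {x : ℝ} (hx : x ∈ U) :
    HasDerivAt f (deriv f x) x :=
  ((hf.differentiableOn hn x hx).differentiableAt (hU.mem_nhds hx)).hasDerivAt

theorem abs_sqrt_sub_sqrt_le {x y : ℝ} (hy : 0 < y) : |√x - √y| ≤ |x - y| / √y := by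
  have hsy : 0 < √y := sqrt_pos.2 hy
  rw [le_div_iff₀ hsy]
  rcases le_or_gt x 0 with hx | hx
  · rw [sqrt_eq_zero'.2 hx, zero_sub, abs_neg, abs_of_nonneg hsy.le,
      abs_of_nonpos (by linarith), mul_self_sqrt hy.le]
    linarith
  · calc |√x - √y| * √y ≤ |√x - √y| * (√x + √y) := by
          gcongr; exact le_add_of_nonneg_left (sqrt_nonneg x)
      _ = |x - y| := by
        rw [← abs_of_pos (add_pos (sqrt_pos.2 hx) hsy), ← abs_mul]
        congr 1
        nlinarith [mul_self_sqrt hx.le, mul_self_sqrt hy.le]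

theorem abs_log_sqrt_add_sqrt_sub_le {x y : ℝ} (hx : 0 < x) (hyx : y ≤ x) :
    |log (√x + √y) - log x / 2| ≤ log 2 := by
  have hsx : 0 < √x := sqrt_pos.2 hx
  have hlow : log √x ≤ log (√x + √y) := log_le_log hsx (le_add_of_nonneg_right (sqrt_nonneg y))
  have hupp : log (√x + √y) ≤ log (2 * √x) :=
    log_le_log (by positivity) (by linarith [sqrt_le_sqrt hyx])
  rw [log_sqrt hx.le] at hlow
  rw [log_mul two_ne_zero hsx.ne', log_sqrt hx.le] at hupp
  rw [abs_le]
  constructor <;> linarith [log_nonneg one_le_two]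

theorem abs_div_sqrt_sub_two_sqrt_le {P Q u a M : ℝ} (ha : 0 < a) (hu : 0 < u)
    (hP : |P - 2 * a * u| ≤ M / 2 * u ^ 2) (hQ : |Q - a * u ^ 2| ≤ M / 6 * u ^ 3)
    (hQa : a / 2 * u ^ 2 ≤ Q) :
    |P / √Q - 2 * √a| ≤ 5 * M / 6 / √(a / 2) * u := by
  have hsa : 0 < √a := sqrt_pos.2 ha
  have hQlow : √(a / 2) * u ≤ √Q := by
    simpa [sqrt_mul (by positivity : 0 ≤ a / 2), sqrt_sq hu.le] using sqrt_le_sqrt hQa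
  have hsQ : 0 < √Q := lt_of_lt_of_le (by positivity) hQlow
  have hroot : |√Q - √a * u| ≤ M / 6 * u ^ 2 / √a := by
    have h := abs_sqrt_sub_sqrt_le (x := Q) (y := a * u ^ 2) (by positivity)
    rw [sqrt_mul ha.le, sqrt_sq hu.le] at h
    calc |√Q - √a * u| ≤ M / 6 * u ^ 3 / (√a * u) := h.trans (by gcongr)
      _ = M / 6 * u ^ 2 / √a := by field_simp
  have hnum : |P - 2 * √a * √Q| ≤ 5 * M / 6 * u ^ 2 := by
    have hsplit : P - 2 * √a * √Q = (P - 2 * a * u) - 2 * √a * (√Q - √a * u) := by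
      linear_combination (-2 * u) * mul_self_sqrt ha.le
    calc |P - 2 * √a * √Q| ≤ |P - 2 * a * u| + 2 * √a * |√Q - √a * u| := by
          rw [hsplit]
          refine (abs_sub _ _).trans ?_
          rw [abs_mul, abs_of_pos (by positivity : (0:ℝ) < 2 * √a)]
      _ ≤ M / 2 * u ^ 2 + 2 * √a * (M / 6 * u ^ 2 / √a) := by gcongr
      _ = 5 * M / 6 * u ^ 2 := by field_simp; ring
  calc |P / √Q - 2 * √a| = |P - 2 * √a * √Q| / √Q := by
        rw [← abs_of_pos hsQ, ← abs_div, abs_of_pos hsQ]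
        congr 1
        field_simp
    _ ≤ 5 * M / 6 * u ^ 2 / (√(a / 2) * u) := by
        have hM : 0 ≤ 5 * M / 6 * u ^ 2 := (abs_nonneg _).trans hnum
        gcongr
    _ = 5 * M / 6 / √(a / 2) * u := by field_simp

theorem hasDerivAt_log_sqrt_add_sqrt {w : ℝ → ℝ} {w' α β x : ℝ} (hw : HasDerivAt w w' x)
    (hα : w x < α) (hβ : w x < β) :
    HasDerivAt (fun y => log (√(α - w y) + √(β - w y)))
      (-w' / (2 * √(α - w x) * √(β - w x))) x := by
  have hA : 0 < √(α - w x) := sqrt_pos.2 (by linarith)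
  have hB : 0 < √(β - w x) := sqrt_pos.2 (by linarith)
  refine ((((hw.const_sub α).sqrt (by linarith)).add ((hw.const_sub β).sqrt (by linarith))).log
    (by simp only [Pi.add_apply]; positivity)).congr_deriv ?_
  simp only [Pi.add_apply]
  field_simp
  ring

theorem mul_sub_le_neg_of_hasDerivAt {W' W'' : ℝ → ℝ} {s m a : ℝ}
    (hW' : ∀ x ∈ Icc s m, HasDerivAt W' (W'' x) x) (hW's : W' s = 0)
    (hW'' : ∀ x ∈ Icc s m, W'' x ≤ -a) : ∀ x ∈ Icc s m, a * (x - s) ≤ -W' x :=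
  le_of_hasDerivAt_le (fun x _ => ((hasDerivAt_id' x).sub_const s).const_mul a)
    (fun x hx => (hW' x hx).neg) (by simp [hW's]) (fun x hx => by linarith [hW'' x hx])

theorem exists_abs_sqrt_sub_mul_div_sqrt_le {W W' W'' W''' κ κ' : ℝ → ℝ} {s m M Mκ : ℝ}
    (hW : ∀ x ∈ Icc s m, HasDerivAt W (W' x) x) (hW' : ∀ x ∈ Icc s m, HasDerivAt W' (W'' x) x)
    (hW'' : ∀ x ∈ Icc s m, HasDerivAt W'' (W''' x) x) (hM : ∀ x ∈ Icc s m, |W''' x| ≤ M)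
    (hκ : ∀ x ∈ Icc s m, HasDerivAt κ (κ' x) x) (hMκ : ∀ x ∈ Icc s m, |κ' x| ≤ Mκ)
    (hW's : W' s = 0) (hW''s : W'' s < 0) (hconc : ∀ x ∈ Icc s m, W'' x ≤ W'' s / 2)
    (hκs : 0 < κ s) :
    ∃ L, ∀ x ∈ Ioc s m,
      |√(2 * κ x) - √(-κ s / W'' s) * -W' x / √(W s - W x)| ≤ L * (x - s) := by
  set a := -W'' s / 2 with ha_def
  set c := √(-κ s / W'' s)
  have ha : 0 < a := by linarith
  -- Since `-W' x / √(W s - W x) → 2√a` as `x → s⁺`, this is the identity making the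
  -- leading terms cancel.
  have hc : c * (2 * √a) = √(2 * κ s) := by
    have hc2 : 2 * κ s = -κ s / W'' s * (2 ^ 2 * a) := by rw [ha_def]; field_simp [hW''s.ne]
    rw [hc2, sqrt_mul (div_nonneg_of_nonpos (by linarith) hW''s.le), sqrt_mul (by norm_num),
      sqrt_sq zero_le_two]
  have hlin := mul_sub_le_neg_of_hasDerivAt (a := a) hW' hW's
    (fun x hx => (hconc x hx).trans_eq (by ring))
  have hquad : ∀ x ∈ Icc s m, a / 2 * (x - s) ^ 2 ≤ W s - W x :=
    le_of_hasDerivAt_le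
      (fun x _ => (((hasDerivAt_id' x).sub_const s).pow 2).const_mul (a / 2))
      (fun x hx => (hW x hx).const_sub (W s)) (by simp)
      (fun x hx => by norm_num; linarith [hlin x hx])
  have hκlip := abs_le_mul_pow_of_abs_deriv_le 0 (φ := fun y => κ y - κ s)
    (fun y hy => (hκ y hy).sub_const _) (sub_self _) (by simpa using hMκ)
  refine ⟨2 * Mκ / √(2 * κ s) + c * (5 * M / 6 / √(a / 2)), fun x hx => ?_⟩
  have hxI : x ∈ Icc s m := Ioc_subset_Icc_self hx
  have hu : 0 < x - s := sub_pos.2 hx.1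
  obtain ⟨hT1, hT2⟩ := taylor_bounds_of_deriv_eq_zero hW hW' hW'' hM hW's x hxI
  have hratio := abs_div_sqrt_sub_two_sqrt_le (P := -W' x) (Q := W s - W x) ha hu
    (by rw [← abs_neg]; convert hT1 using 2; ring) (by rw [← abs_neg]; convert hT2 using 2; ring)
    (hquad x hxI)
  have hκx : |√(2 * κ x) - √(2 * κ s)| ≤ 2 * Mκ / √(2 * κ s) * (x - s) := by
    refine (abs_sqrt_sub_sqrt_le (by positivity)).trans ?_
    rw [← mul_sub, abs_mul, abs_two, mul_div_right_comm]
    calc 2 / √(2 * κ s) * |κ x - κ s| ≤ 2 / √(2 * κ s) * (Mκ * (x - s)) := by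
          gcongr; simpa using hκlip x hxI
      _ = 2 * Mκ / √(2 * κ s) * (x - s) := by ring
  calc |√(2 * κ x) - c * -W' x / √(W s - W x)|
      = |(√(2 * κ x) - √(2 * κ s)) - c * (-W' x / √(W s - W x) - 2 * √a)| := by
        rw [mul_sub, ← hc, mul_div_assoc]; ring_nf
    _ ≤ |√(2 * κ x) - √(2 * κ s)| + c * |-W' x / √(W s - W x) - 2 * √a| :=
        (abs_sub _ _).trans_eq (by rw [abs_mul, abs_of_nonneg (sqrt_nonneg _)])
    _ ≤ 2 * Mκ / √(2 * κ s) * (x - s) + c * (5 * M / 6 / √(a / 2) * (x - s)) := by gcongr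
    _ = _ := by ring

theorem exists_abs_sqrt_sub_mul_div_sqrt_le_of_contDiffOn {W κ : ℝ → ℝ} {U : Set ℝ} {s b : ℝ}
    (hU : IsOpen U) (hs : s ∈ U) (hsb : s < b) (hW : ContDiffOn ℝ 3 W U)
    (hκ : ContDiffOn ℝ 1 κ U) (hκs : 0 < κ s) (hW's : deriv W s = 0)
    (hW''s : deriv (deriv W) s < 0) :
    ∃ m ∈ Ioo s b, ∃ a > 0, (∀ x ∈ Icc s m, a * (x - s) ≤ -deriv W x) ∧
      ∃ L, ∀ x ∈ Ioc s m,
        |√(2 * κ x) - √(-κ s / deriv (deriv W) s) * -deriv W x / √(W s - W x)| ≤ L * (x - s) := by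
  have hW₁ : ContDiffOn ℝ 2 (deriv W) U := hW.deriv_of_isOpen hU (by norm_num)
  have hW₂ : ContDiffOn ℝ 1 (deriv (deriv W)) U := hW₁.deriv_of_isOpen hU (by norm_num)
  have hnear : ∀ᶠ x in 𝓝 s, x ∈ U ∧ x < b ∧ deriv (deriv W) x < deriv (deriv W) s / 2 :=
    (hU.eventually_mem hs).and ((isOpen_Iio.eventually_mem hsb).and
      ((hW₂.continuousOn.continuousAt (hU.mem_nhds hs)).eventually_lt continuousAt_const
        (by linarith)))
  obtain ⟨m, hsm, hm⟩ :=
    mem_nhdsGE_iff_exists_Icc_subset.1 (mem_nhdsWithin_of_mem_nhds hnear)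
  have hmU : Icc s m ⊆ U := fun x hx => (hm hx).1
  obtain ⟨M, hM⟩ := isCompact_Icc.exists_bound_of_continuousOn
    ((hW₂.continuousOn_deriv_of_isOpen hU le_rfl).mono hmU)
  obtain ⟨Mκ, hMκ⟩ := isCompact_Icc.exists_bound_of_continuousOn
    ((hκ.continuousOn_deriv_of_isOpen hU le_rfl).mono hmU)
  have hd₁ : ∀ x ∈ Icc s m, HasDerivAt (deriv W) (deriv (deriv W) x) x :=
    fun x hx => hW₁.hasDerivAt_deriv hU (by norm_num) (hmU hx)
  have hconc : ∀ x ∈ Icc s m, deriv (deriv W) x ≤ deriv (deriv W) s / 2 :=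
    fun x hx => (hm hx).2.2.le
  refine ⟨m, ⟨hsm, (hm (right_mem_Icc.2 hsm.le)).2.1⟩, -deriv (deriv W) s / 2, by linarith,
    mul_sub_le_neg_of_hasDerivAt hd₁ hW's fun x hx => (hconc x hx).trans_eq (by ring),
    exists_abs_sqrt_sub_mul_div_sqrt_le
      (fun x hx => hW.hasDerivAt_deriv hU (by norm_num) (hmU hx)) hd₁
      (fun x hx => hW₂.hasDerivAt_deriv hU (by norm_num) (hmU hx)) (fun x hx => hM x hx)
      (fun x hx => hκ.hasDerivAt_deriv hU (by norm_num) (hmU hx)) (fun x hx => hMκ x hx)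
      hW's hW''s hconc hκs⟩

theorem lt_of_mul_sub_le_neg_deriv {W : ℝ → ℝ} {s t m μ a : ℝ} (hst : s < t) (htm : t ≤ m)
    (hWt : W t = μ) (hW : ∀ x ∈ Icc s m, HasDerivAt W (deriv W x) x) (ha : 0 < a)
    (hlin : ∀ x ∈ Icc s m, a * (x - s) ≤ -deriv W x) :
    (∀ x ∈ Ioc t m, W x < μ) ∧ μ < W s := by
  have hanti : StrictAntiOn W (Icc s m) :=
    strictAntiOn_of_deriv_neg (convex_Icc s m)
      (fun x hx => (hW x hx).continuousAt.continuousWithinAt) fun x hx => by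
        rw [interior_Icc] at hx
        nlinarith [hlin x (Ioo_subset_Icc_self hx), hx.1]
  have ht : t ∈ Icc s m := ⟨hst.le, htm⟩
  exact ⟨fun x hx => hWt ▸ hanti ht ⟨hst.le.trans hx.1.le, hx.2⟩ hx.1,
    hWt ▸ hanti (left_mem_Icc.2 (hst.le.trans htm)) ht hst⟩

theorem intervalIntegrable_and_integral_eq_log_sqrt_add_sqrt {W : ℝ → ℝ} {s t m μ a c : ℝ}
    (hst : s < t) (htm : t ≤ m) (hWt : W t = μ)
    (hW : ∀ x ∈ Icc s m, HasDerivAt W (deriv W x) x) (ha : 0 < a)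
    (hlin : ∀ x ∈ Icc s m, a * (x - s) ≤ -deriv W x) (hc : 0 ≤ c) :
    IntervalIntegrable (fun x => c * -deriv W x / (√(W s - W x) * √(μ - W x))) volume t m ∧
      ∫ x in t..m, c * -deriv W x / (√(W s - W x) * √(μ - W x)) =
        2 * c * log (√(W s - W m) + √(μ - W m)) - c * log (W s - μ) := by
  obtain ⟨hWμ, hμs⟩ := lt_of_mul_sub_le_neg_deriv hst htm hWt hW ha hlin
  have hts : Icc t m ⊆ Icc s m := Icc_subset_Icc_left hst.le
  have hWs : ∀ x ∈ Icc t m, W x < W s := fun x hx => by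
    rcases hx.1.eq_or_lt with rfl | h
    · exact hWt ▸ hμs
    · exact (hWμ x ⟨h, hx.2⟩).trans hμs
  have hWc : ContinuousOn (fun x => W x) (Icc t m) := fun x hx =>
    (hW x (hts hx)).continuousAt.continuousWithinAt
  set F := fun x => 2 * c * log (√(W s - W x) + √(μ - W x))
  have hF : ∀ x ∈ Ioo t m,
      HasDerivAt F (c * -deriv W x / (√(W s - W x) * √(μ - W x))) x := fun x hx =>
    ((hasDerivAt_log_sqrt_add_sqrt (hW x (hts (Ioo_subset_Icc_self hx)))
      (hWs x (Ioo_subset_Icc_self hx)) (hWμ x (Ioo_subset_Ioc_self hx))).const_mul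
        (2 * c)).congr_deriv (by field_simp)
  have hFc : ContinuousOn F (Icc t m) :=
    continuousOn_const.mul <| ContinuousOn.log
      ((continuousOn_const.sub hWc).sqrt.add (continuousOn_const.sub hWc).sqrt) fun x hx =>
        (add_pos_of_pos_of_nonneg (sqrt_pos.2 (sub_pos.2 (hWs x hx))) (sqrt_nonneg _)).ne'
  have hint : IntervalIntegrable (fun x => c * -deriv W x / (√(W s - W x) * √(μ - W x)))
      volume t m :=
    (intervalIntegrable_iff_integrableOn_Ioc_of_le htm).2 <|
      intervalIntegral.integrableOn_deriv_of_nonneg hFc hF fun x hx =>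
        have hx' : x ∈ Icc s m := ⟨hst.le.trans hx.1.le, hx.2.le⟩
        div_nonneg (mul_nonneg hc (by nlinarith [hlin x hx', hx'.1])) (by positivity)
  refine ⟨hint, ?_⟩
  rw [intervalIntegral.integral_eq_sub_of_hasDerivAt_of_le htm hFc hF hint]
  simp only [F, hWt, sub_self, sqrt_zero, add_zero, log_sqrt (sub_pos.2 hμs).le]
  ring

theorem intervalIntegrable_and_abs_integral_sub_le {W κ : ℝ → ℝ} {s t m μ a c L : ℝ}
    (hst : s < t) (htm : t ≤ m) (hWt : W t = μ)
    (hW : ∀ x ∈ Icc s m, HasDerivAt W (deriv W x) x) (ha : 0 < a)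
    (hlin : ∀ x ∈ Icc s m, a * (x - s) ≤ -deriv W x) (hκ : ContinuousOn κ (Icc s m))
    (hR : ∀ x ∈ Ioc s m, |√(2 * κ x) - c * -deriv W x / √(W s - W x)| ≤ L * (x - s)) :
    IntervalIntegrable (fun x => √(2 * κ x / (μ - W x)) -
        c * -deriv W x / (√(W s - W x) * √(μ - W x))) volume t m ∧
      |∫ x in t..m, (√(2 * κ x / (μ - W x)) - c * -deriv W x / (√(W s - W x) * √(μ - W x)))|
        ≤ 2 * L / a * √(W s - W m) := by
  obtain ⟨hWμ, hμs⟩ := lt_of_mul_sub_le_neg_deriv hst htm hWt hW ha hlin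
  have hL : 0 ≤ L := nonneg_of_mul_nonneg_left
    ((abs_nonneg _).trans (hR m ⟨hst.trans_le htm, le_rfl⟩)) (by linarith)
  have hts : Ioo t m ⊆ Icc s m := fun x hx => ⟨hst.le.trans hx.1.le, hx.2.le⟩
  have hWc : ContinuousOn W (Icc s m) := fun x hx => (hW x hx).continuousAt.continuousWithinAt
  have hμx : ∀ x ∈ Ioo t m, 0 < μ - W x := fun x hx =>
    sub_pos.2 (hWμ x (Ioo_subset_Ioc_self hx))
  have hrem : ∀ x ∈ Ioo t m, |√(2 * κ x / (μ - W x)) -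
      c * -deriv W x / (√(W s - W x) * √(μ - W x))| ≤ L / a * -deriv W x / √(μ - W x) := by
    intro x hx
    have hsx : 0 < √(W s - W x) := sqrt_pos.2 (by linarith [hμx x hx])
    have hsμ : 0 < √(μ - W x) := sqrt_pos.2 (hμx x hx)
    have hsplit : √(2 * κ x / (μ - W x)) - c * -deriv W x / (√(W s - W x) * √(μ - W x)) =
        (√(2 * κ x) - c * -deriv W x / √(W s - W x)) / √(μ - W x) := by
      rw [sqrt_div' _ (hμx x hx).le]
      field_simp
    rw [hsplit, abs_div, abs_of_pos hsμ]
    gcongr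
    calc _ ≤ L * (x - s) := hR x ⟨hst.trans hx.1, hx.2.le⟩
      _ ≤ L * (-deriv W x / a) := by
          gcongr; rw [le_div_iff₀ ha]; linarith [hlin x (hts hx)]
      _ = L / a * -deriv W x := by ring
  have hG : ∀ x ∈ Ioo t m,
      HasDerivAt (fun y => 2 * L / a * √(μ - W y)) (L / a * -deriv W x / √(μ - W x)) x :=
    fun x hx => ((((hW x (hts hx)).const_sub μ).sqrt (hμx x hx).ne').const_mul
      (2 * L / a)).congr_deriv (by field_simp)
  have hGc : ContinuousOn (fun y => 2 * L / a * √(μ - W y)) (Icc t m) :=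
    continuousOn_const.mul (continuousOn_const.sub (hWc.mono (Icc_subset_Icc_left hst.le))).sqrt
  have hmeas : AEStronglyMeasurable (fun x => √(2 * κ x / (μ - W x)) -
      c * -deriv W x / (√(W s - W x) * √(μ - W x))) (volume.restrict (Ioo t m)) := by
    have hWc' : ContinuousOn W (Ioo t m) := hWc.mono hts
    refine ContinuousOn.aestronglyMeasurable (((continuousOn_const.mul (hκ.mono hts)).div
      (continuousOn_const.sub hWc') fun x hx => (hμx x hx).ne').sqrt) measurableSet_Ioo |>.sub ?_
    exact (((measurable_deriv W).neg.const_mul c).aemeasurable.div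
      ((((continuousOn_const.sub hWc').sqrt.mul (continuousOn_const.sub hWc').sqrt)
        |>.aestronglyMeasurable measurableSet_Ioo).aemeasurable)).aestronglyMeasurable
  refine ⟨(intervalIntegrable_of_abs_le_hasDerivAt htm hmeas hGc hG hrem).1,
    (abs_intervalIntegral_le_of_abs_le_hasDerivAt htm hmeas hGc hG hrem).trans ?_⟩
  simp only [hWt, sub_self, sqrt_zero, mul_zero, sub_zero]
  gcongr

theorem intervalIntegrable_and_abs_integral_sqrt_div_add_log_le {W κ : ℝ → ℝ}
    {s t m μ a c L : ℝ} (hst : s < t) (htm : t ≤ m) (hWt : W t = μ)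
    (hW : ∀ x ∈ Icc s m, HasDerivAt W (deriv W x) x) (ha : 0 < a)
    (hlin : ∀ x ∈ Icc s m, a * (x - s) ≤ -deriv W x) (hc : 0 ≤ c)
    (hκ : ContinuousOn κ (Icc s m))
    (hR : ∀ x ∈ Ioc s m, |√(2 * κ x) - c * -deriv W x / √(W s - W x)| ≤ L * (x - s)) :
    IntervalIntegrable (fun x => √(2 * κ x / (μ - W x))) volume t m ∧
      |(∫ x in t..m, √(2 * κ x / (μ - W x))) + c * log (W s - μ)| ≤
        c * |log (W s - W m)| + 2 * c * log 2 + 2 * L / a * √(W s - W m) := by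
  obtain ⟨hWμ, hμs⟩ := lt_of_mul_sub_le_neg_deriv hst htm hWt hW ha hlin
  obtain ⟨hI₁, h₁⟩ :=
    intervalIntegrable_and_integral_eq_log_sqrt_add_sqrt hst htm hWt hW ha hlin hc
  obtain ⟨hI₂, h₂⟩ := intervalIntegrable_and_abs_integral_sub_le hst htm hWt hW ha hlin hκ hR
  have hI := hI₂.add hI₁
  simp only [sub_add_cancel] at hI
  refine ⟨hI, ?_⟩
  have hWm : W m ≤ μ :=
    htm.eq_or_lt.elim (fun h => h ▸ hWt.le) fun h => (hWμ m ⟨h, le_rfl⟩).le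
  have hlog := abs_log_sqrt_add_sqrt_sub_le (sub_pos.2 (hWm.trans_lt hμs))
    (sub_le_sub_right hμs.le (W m))
  have hF : |2 * c * log (√(W s - W m) + √(μ - W m))| ≤
      c * |log (W s - W m)| + 2 * c * log 2 := by
    have := abs_sub_abs_le_abs_sub (log (√(W s - W m) + √(μ - W m))) (log (W s - W m) / 2)
    rw [abs_div, abs_two] at this
    rw [abs_mul, abs_of_nonneg (by positivity : 0 ≤ 2 * c)]
    nlinarith
  have hsum : ∫ x in t..m, √(2 * κ x / (μ - W x)) =
      (∫ x in t..m,
        (√(2 * κ x / (μ - W x)) - c * -deriv W x / (√(W s - W x) * √(μ - W x)))) +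
        ∫ x in t..m, c * -deriv W x / (√(W s - W x) * √(μ - W x)) := by
    rw [← intervalIntegral.integral_add hI₂ hI₁]
    simp only [sub_add_cancel]
  rw [hsum, h₁]
  rw [abs_le] at h₂ hF ⊢
  constructor <;> linarith

theorem intervalIntegrable_and_abs_integral_sqrt_div_le_of_le {W κ : ℝ → ℝ} {m p μ ε K : ℝ}
    (hmp : m ≤ p) (hε : 0 < ε) (hK : 0 ≤ K) (hW : ContinuousOn W (Icc m p))
    (hκ : ContinuousOn κ (Icc m p)) (hWμ : ∀ x ∈ Icc m p, ε ≤ μ - W x)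
    (hκK : ∀ x ∈ Icc m p, κ x ≤ K) :
    IntervalIntegrable (fun x => √(2 * κ x / (μ - W x))) volume m p ∧
      |∫ x in m..p, √(2 * κ x / (μ - W x))| ≤ √(2 * K / ε) * (p - m) := by
  refine ⟨ContinuousOn.intervalIntegrable_of_Icc hmp <|
    ((continuousOn_const.mul hκ).div (continuousOn_const.sub hW)
      fun x hx => (hε.trans_le (hWμ x hx)).ne').sqrt, ?_⟩
  have h := intervalIntegral.norm_integral_le_of_norm_le_const
    (f := fun x => √(2 * κ x / (μ - W x))) (C := √(2 * K / ε)) fun x hx => by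
      rw [uIoc_of_le hmp] at hx
      rw [norm_of_nonneg (sqrt_nonneg _)]
      exact sqrt_le_sqrt (div_le_div₀ (by positivity)
        (by linarith [hκK x (Ioc_subset_Icc_self hx)]) hε (hWμ x (Ioc_subset_Icc_self hx)))
  rwa [abs_of_nonneg (sub_nonneg.2 hmp)] at h

theorem intervalIntegrable_and_abs_integral_sqrt_div_le_of_le_deriv {W κ : ℝ → ℝ}
    {p t μ d K : ℝ} (hpt : p ≤ t) (hWt : W t = μ)
    (hW : ∀ x ∈ Icc p t, HasDerivAt W (deriv W x) x) (hd : 0 < d)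
    (hdW : ∀ x ∈ Icc p t, d ≤ deriv W x) (hκ : ContinuousOn κ (Icc p t))
    (hκK : ∀ x ∈ Icc p t, κ x ≤ K) :
    IntervalIntegrable (fun x => √(2 * κ x / (μ - W x))) volume p t ∧
      |∫ x in p..t, √(2 * κ x / (μ - W x))| ≤ 2 * √(2 * K) / d * √(μ - W p) := by
  have hWc : ContinuousOn W (Icc p t) := fun x hx => (hW x hx).continuousAt.continuousWithinAt
  have hmono : StrictMonoOn W (Icc p t) :=
    strictMonoOn_of_deriv_pos (convex_Icc p t) hWc fun x hx =>
      hd.trans_le (hdW x (interior_subset hx))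
  have hWμ : ∀ x ∈ Ioo p t, 0 < μ - W x := fun x hx =>
    sub_pos.2 (hWt ▸ hmono (Ioo_subset_Icc_self hx) (right_mem_Icc.2 hpt) hx.2)
  have hf : AEStronglyMeasurable (fun x => √(2 * κ x / (μ - W x)))
      (volume.restrict (Ioo p t)) :=
    ContinuousOn.aestronglyMeasurable
      (((continuousOn_const.mul (hκ.mono Ioo_subset_Icc_self)).div
        (continuousOn_const.sub (hWc.mono Ioo_subset_Icc_self)) fun x hx => (hWμ x hx).ne').sqrt)
      measurableSet_Ioo
  have hG : ∀ x ∈ Ioo p t, HasDerivAt (fun y => -(2 * √(2 * K) / d) * √(μ - W y))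
      (√(2 * K) / d * deriv W x / √(μ - W x)) x := fun x hx =>
    ((((hW x (Ioo_subset_Icc_self hx)).const_sub μ).sqrt (hWμ x hx).ne').const_mul
      (-(2 * √(2 * K) / d))).congr_deriv (by field_simp)
  have hGc : ContinuousOn (fun y => -(2 * √(2 * K) / d) * √(μ - W y)) (Icc p t) :=
    continuousOn_const.mul (continuousOn_const.sub hWc).sqrt
  have hbound : ∀ x ∈ Ioo p t,
      |√(2 * κ x / (μ - W x))| ≤ √(2 * K) / d * deriv W x / √(μ - W x) := by
    intro x hx
    have hx' := Ioo_subset_Icc_self hx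
    rw [abs_of_nonneg (sqrt_nonneg _), sqrt_div' _ (hWμ x hx).le]
    gcongr
    calc √(2 * κ x) ≤ √(2 * K) := sqrt_le_sqrt (by linarith [hκK x hx'])
      _ ≤ √(2 * K) / d * deriv W x := by
          rw [div_mul_eq_mul_div, le_div_iff₀ hd]
          exact mul_le_mul_of_nonneg_left (hdW x hx') (sqrt_nonneg _)
  refine ⟨(intervalIntegrable_of_abs_le_hasDerivAt hpt hf hGc hG hbound).1, ?_⟩
  refine (abs_intervalIntegral_le_of_abs_le_hasDerivAt hpt hf hGc hG hbound).trans_eq ?_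
  simp only [hWt, sub_self, sqrt_zero, mul_zero]
  ring

theorem exists_mem_Ioo_eq_and_le_of_strictAntiOn_of_strictMonoOn {W : ℝ → ℝ} {a b c m : ℝ}
    (hanti : StrictAntiOn W (Icc a b)) (hmono : StrictMonoOn W (Icc b c))
    (hW : ContinuousOn W (Icc b c)) (hbc : b ≤ c) (hm : m ∈ Ico a b) (hmc : W m < W c) :
    ∃ p ∈ Ioo b c, W p = W m ∧ ∀ x ∈ Icc m p, W x ≤ W m := by
  have hmI : m ∈ Icc a b := Ico_subset_Icc_self hm
  obtain ⟨p, hp, hWp⟩ := intermediate_value_Ioo hbc hW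
    ⟨hanti hmI (right_mem_Icc.2 (hm.1.trans hm.2.le)) hm.2, hmc⟩
  refine ⟨p, hp, hWp, fun x hx => ?_⟩
  rcases le_total x b with h | h
  · exact (hanti.le_iff_ge ⟨hm.1.trans hx.1, h⟩ hmI).2 hx.1
  · exact hWp ▸ (hmono.le_iff_le ⟨h, hx.2.trans hp.2.le⟩ (Ioo_subset_Icc_self hp)).2 hx.2

theorem abs_integral_Ioo_sqrt_div_add_log_le {W κ : ℝ → ℝ} {s m p q t₂ t₃ μ a c L d K : ℝ}
    (hst₂ : s < t₂) (ht₂m : t₂ ≤ m) (hmp : m ≤ p) (hpt₃ : p ≤ t₃) (ht₃q : t₃ ≤ q)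
    (hWt₂ : W t₂ = μ) (hWt₃ : W t₃ = μ) (hμ : (W m + W s) / 2 < μ)
    (hW : ∀ x ∈ Icc s q, HasDerivAt W (deriv W x) x) (hκ : ContinuousOn κ (Icc s q))
    (hκK : ∀ x ∈ Icc s q, κ x ≤ K) (hK : 0 ≤ K)
    (ha : 0 < a) (hlin : ∀ x ∈ Icc s m, a * (x - s) ≤ -deriv W x) (hc : 0 ≤ c)
    (hR : ∀ x ∈ Ioc s m, |√(2 * κ x) - c * -deriv W x / √(W s - W x)| ≤ L * (x - s))
    (hWmp : ∀ x ∈ Icc m p, W x ≤ W m) (hWp : W p = W m)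
    (hd : 0 < d) (hdW : ∀ x ∈ Icc p q, d ≤ deriv W x) :
    |(∫ x in Ioo t₂ t₃, √(2 * κ x / (μ - W x))) + c * log (W s - μ)| ≤
      c * |log (W s - W m)| + 2 * c * log 2 + 2 * L / a * √(W s - W m) +
        √(2 * K / ((W s - W m) / 2)) * (p - m) + 2 * √(2 * K) / d * √(W s - W m) := by
  have hsub₁ : Icc s m ⊆ Icc s q := Icc_subset_Icc_right (hmp.trans (hpt₃.trans ht₃q))
  have hsub₂ : Icc m p ⊆ Icc s q :=
    Icc_subset_Icc (hst₂.le.trans ht₂m) (hpt₃.trans ht₃q)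
  have hsub₃ : Icc p t₃ ⊆ Icc s q :=
    Icc_subset_Icc ((hst₂.le.trans ht₂m).trans hmp) ht₃q
  have hW₁ : ∀ x ∈ Icc s m, HasDerivAt W (deriv W x) x := fun x hx => hW x (hsub₁ hx)
  have hμs : μ < W s := (lt_of_mul_sub_le_neg_deriv hst₂ ht₂m hWt₂ hW₁ ha hlin).2
  obtain ⟨hI₁, hb₁⟩ := intervalIntegrable_and_abs_integral_sqrt_div_add_log_le hst₂ ht₂m hWt₂
    hW₁ ha hlin hc (hκ.mono hsub₁) hR
  obtain ⟨hI₂, hb₂⟩ := intervalIntegrable_and_abs_integral_sqrt_div_le_of_le (μ := μ) hmp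
    (by linarith : 0 < (W s - W m) / 2) hK
    (fun x hx => (hW x (hsub₂ hx)).continuousAt.continuousWithinAt) (hκ.mono hsub₂)
    (fun x hx => by linarith [hWmp x hx]) (fun x hx => hκK x (hsub₂ hx))
  obtain ⟨hI₃, hb₃⟩ := intervalIntegrable_and_abs_integral_sqrt_div_le_of_le_deriv hpt₃ hWt₃
    (fun x hx => hW x (hsub₃ hx)) hd (fun x hx => hdW x ⟨hx.1, hx.2.trans ht₃q⟩)
    (hκ.mono hsub₃) (fun x hx => hκK x (hsub₃ hx))
  have hb₃' :
      |∫ x in p..t₃, √(2 * κ x / (μ - W x))| ≤ 2 * √(2 * K) / d * √(W s - W m) :=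
    hb₃.trans (by rw [hWp]; gcongr)
  rw [← integral_Ioc_eq_integral_Ioo,
    ← intervalIntegral.integral_of_le ((ht₂m.trans hmp).trans hpt₃),
    ← intervalIntegral.integral_add_adjacent_intervals (hI₁.trans hI₂) hI₃,
    ← intervalIntegral.integral_add_adjacent_intervals hI₁ hI₂]
  rw [abs_le] at hb₁ hb₂ hb₃' ⊢
  constructor <;> linarith

theorem soliton_limit_of_period_general
    (A B : ℝ) (W : ℝ → ℝ)
    (hW : ContDiffOn ℝ (⊤ : ℕ∞) W (Set.Ioo A B))
    (vs v₀ vS : ℝ)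
    (hmems : vs ∈ Set.Ioo A B) (hmemS : vS ∈ Set.Ioo A B)
    (horder1 : vs < v₀) (horder2 : v₀ < vS)
    (hds : deriv W vs = 0)
    (hs2 : deriv (deriv W) vs < 0)
    (hneg : ∀ v ∈ Set.Ioo vs v₀, deriv W v < 0)
    (hpos : ∀ v ∈ Set.Ioc v₀ vS, 0 < deriv W v)
    (hμs : W vs = W vS)
    (v₂ v₃ : ℝ → ℝ)
    (hv : ∀ μ ∈ Set.Ioo (W v₀) (W vs),
      v₂ μ ∈ Set.Ioo vs v₀ ∧ v₃ μ ∈ Set.Ioo v₀ vS ∧ W (v₂ μ) = μ ∧ W (v₃ μ) = μ)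
    (κ : ℝ → ℝ) (hκ : ContDiffOn ℝ (⊤ : ℕ∞) κ (Set.Ioo A B))
    (hκpos : ∀ v ∈ Set.Ioo A B, 0 < κ v) :
    ∃ μbar ∈ Set.Ioo (W v₀) (W vs), ∃ C > (0:ℝ), ∀ μ ∈ Set.Ioo μbar (W vs),
      |(∫ v in Set.Ioo (v₂ μ) (v₃ μ), Real.sqrt (2 * κ v / (μ - W v)))
        + Real.sqrt (-κ vs / deriv (deriv W) vs) * Real.log (W vs - μ)| ≤ C := by
  have hU : Icc vs vS ⊆ Ioo A B := Icc_subset_Ioo hmems.1 hmemS.2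
  have hWc : ContinuousOn W (Icc vs vS) := hW.continuousOn.mono hU
  obtain ⟨m, ⟨hsm, hm0⟩, a, ha, hlin, L, hR⟩ :=
    exists_abs_sqrt_sub_mul_div_sqrt_le_of_contDiffOn isOpen_Ioo hmems horder1
      (hW.of_le (WithTop.coe_le_coe.2 le_top)) (hκ.of_le (WithTop.coe_le_coe.2 le_top))
      (hκpos vs hmems) hds hs2
  have hanti : StrictAntiOn W (Icc vs v₀) :=
    strictAntiOn_of_deriv_neg (convex_Icc _ _) (hWc.mono (Icc_subset_Icc_right horder2.le))
      (by simpa using hneg)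
  have hmono : StrictMonoOn W (Icc v₀ vS) :=
    strictMonoOn_of_deriv_pos (convex_Icc _ _) (hWc.mono (Icc_subset_Icc_left horder1.le))
      (by simpa using fun x hx => hpos x (Ioo_subset_Ioc_self hx))
  have hmI : m ∈ Icc vs v₀ := ⟨hsm.le, hm0.le⟩
  have hW₀m : W v₀ < W m := hanti hmI (right_mem_Icc.2 horder1.le) hm0
  have hWms : W m < W vs := hanti (left_mem_Icc.2 horder1.le) hmI hsm
  obtain ⟨p, ⟨hp0, hpS⟩, hWp, hWmp⟩ :=
    exists_mem_Ioo_eq_and_le_of_strictAntiOn_of_strictMonoOn hanti hmono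
      (hWc.mono (Icc_subset_Icc_left horder1.le)) horder2.le ⟨hsm.le, hm0⟩ (hμs ▸ hWms)
  obtain ⟨d, hd, hdW⟩ := isCompact_Icc.exists_forall_le'
    ((hW.continuousOn_deriv_of_isOpen isOpen_Ioo (by simp)).mono
      ((Icc_subset_Icc_left (horder1.trans hp0).le).trans hU))
    fun x hx => hpos x ⟨hp0.trans_le hx.1, hx.2⟩
  obtain ⟨K, hK⟩ := isCompact_Icc.exists_bound_of_continuousOn (hκ.continuousOn.mono hU)
  set c := √(-κ vs / deriv (deriv W) vs)
  refine ⟨(W m + W vs) / 2, ⟨by linarith, by linarith⟩,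
    max (c * |log (W vs - W m)| + 2 * c * log 2 + 2 * L / a * √(W vs - W m) +
      √(2 * K / ((W vs - W m) / 2)) * (p - m) + 2 * √(2 * K) / d * √(W vs - W m)) 1,
    by positivity, fun μ hμ => le_max_of_le_left ?_⟩
  obtain ⟨⟨h2s, h20⟩, ⟨h30, h3S⟩, hW2, hW3⟩ := hv μ ⟨by linarith [hμ.1], hμ.2⟩
  exact abs_integral_Ioo_sqrt_div_add_log_le h2s
    ((hanti.lt_iff_gt hmI ⟨h2s.le, h20.le⟩).1 (by linarith [hμ.1])).le (hm0.trans hp0).le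
    ((hmono.lt_iff_lt ⟨hp0.le, hpS.le⟩ ⟨h30.le, h3S.le⟩).1 (by linarith [hμ.1])).le h3S.le
    hW2 hW3 hμ.1 (fun x hx => hW.hasDerivAt_deriv isOpen_Ioo (by simp) (hU hx))
    (hκ.continuousOn.mono hU) (fun x hx => (le_norm_self _).trans (hK x hx))
    ((norm_nonneg _).trans (hK vs (left_mem_Icc.2 (horder1.trans horder2).le)))
    ha hlin (sqrt_nonneg _) hR hWmp hWp hd hdW

/-- Soliton limit of the period:
`Ξ(μ) = -√(-κ(vₛ)/W''(vₛ)) ln(μₛ - μ) + O(1)` as `μ → μₛ⁻`. -/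
theorem soliton_limit_of_period
    (A B : ℝ) (hAB : A < B) (W : ℝ → ℝ)
    (hW : ContDiffOn ℝ (⊤ : ℕ∞) W (Set.Ioo A B))
    (vs v₀ vS : ℝ)
    (hmems : vs ∈ Set.Ioo A B) (hmem0 : v₀ ∈ Set.Ioo A B) (hmemS : vS ∈ Set.Ioo A B)
    (horder1 : vs < v₀) (horder2 : v₀ < vS)
    (hds : deriv W vs = 0) (hd0 : deriv W v₀ = 0)
    (hs2 : deriv (deriv W) vs < 0) (h02 : 0 < deriv (deriv W) v₀)
    (hneg : ∀ v ∈ Set.Ioo vs v₀, deriv W v < 0)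
    (hpos : ∀ v ∈ Set.Ioc v₀ vS, 0 < deriv W v)
    (hμs : W vs = W vS) (hμ0 : W v₀ < W vs)
    (v₂ v₃ : ℝ → ℝ)
    (hv : ∀ μ ∈ Set.Ioo (W v₀) (W vs),
      v₂ μ ∈ Set.Ioo vs v₀ ∧ v₃ μ ∈ Set.Ioo v₀ vS ∧ W (v₂ μ) = μ ∧ W (v₃ μ) = μ)
    (κ : ℝ → ℝ) (hκ : ContDiffOn ℝ (⊤ : ℕ∞) κ (Set.Ioo A B))
    (hκpos : ∀ v ∈ Set.Ioo A B, 0 < κ v) :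
    ∃ μbar ∈ Set.Ioo (W v₀) (W vs), ∃ C > (0:ℝ), ∀ μ ∈ Set.Ioo μbar (W vs),
      |(∫ v in Set.Ioo (v₂ μ) (v₃ μ), Real.sqrt (2 * κ v / (μ - W v)))
        + Real.sqrt (-κ vs / deriv (deriv W) vs) * Real.log (W vs - μ)| ≤ C :=
  soliton_limit_of_period_general A B W hW vs v₀ vS hmems hmemS horder1 horder2 hds hs2 hneg hpos
    hμs v₂ v₃ hv κ hκ hκpos
end
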